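/- arXiv:math/0509673 — 11 statements merged into one kernel-verified Lean document; each statement's English description precedes it below -/
import Mathlib

section
/- In the algebra H_I, the bracket element (ij) = x_i y_j - y_i x_j - h y_i y_j is central: it commutes with every generator x_k and y_k for all k in I. -/
section
variable {R : Type*} [Ring R] [Algebra ℂ R] {ι : Type*} [LinearOrder ι]

private theorem bracket_central_key (h : ℂ) (x y : ι → R)
    (rel_diag : ∀ i, x i * y i = y i * x i + h • (y i * y i))
    (rel_xy : ∀ i j, i < j → x j * y i = y i * x j + h • (y i * y j))
    (rel_yx : ∀ i j, i < j → y j * x i = x i * y j - h • (y i * y j))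
    (rel_yy : ∀ i j, i < j → y j * y i = y i * y j)
    (rel_xx : ∀ i j, i < j →
      x j * x i = x i * x j - h • (x i * y j) + h • (y i * x j) + (h * h) • (y i * y j))
    {i j : ι} (hij : i < j) (k : ι) :
    (x i * y j - y i * x j - h • (y i * y j)) * x k =
      x k * (x i * y j - y i * x j - h • (y i * y j)) ∧
    (x i * y j - y i * x j - h • (y i * y j)) * y k =
      y k * (x i * y j - y i * x j - h • (y i * y j)) := by
  have hd : ∀ a, ∀ t : R, x a * (y a * t) = y a * (x a * t) + h • (y a * (y a * t)) := by
    intro a t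
    rw [← mul_assoc, rel_diag a, add_mul, smul_mul_assoc, mul_assoc, mul_assoc]
  have hxy' : ∀ a b, a < b → ∀ t : R,
      x b * (y a * t) = y a * (x b * t) + h • (y a * (y b * t)) := by
    intro a b hab t
    rw [← mul_assoc, rel_xy a b hab, add_mul, smul_mul_assoc, mul_assoc, mul_assoc]
  have hyx' : ∀ a b, a < b → ∀ t : R,
      y b * (x a * t) = x a * (y b * t) - h • (y a * (y b * t)) := by
    intro a b hab t
    rw [← mul_assoc, rel_yx a b hab, sub_mul, smul_mul_assoc, mul_assoc, mul_assoc]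
  have hyy' : ∀ a b, a < b → ∀ t : R, y b * (y a * t) = y a * (y b * t) := by
    intro a b hab t
    rw [← mul_assoc, rel_yy a b hab, mul_assoc]
  have hxx' : ∀ a b, a < b → ∀ t : R, x b * (x a * t) =
      x a * (x b * t) - h • (x a * (y b * t)) + h • (y a * (x b * t))
        + (h * h) • (y a * (y b * t)) := by
    intro a b hab t
    rw [← mul_assoc, rel_xx a b hab, add_mul, add_mul, sub_mul, smul_mul_assoc, smul_mul_assoc,
      smul_mul_assoc, mul_assoc, mul_assoc, mul_assoc, mul_assoc]
  rcases lt_trichotomy k i with hki | rfl | hik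
  · have hkj : k < j := hki.trans hij
    constructor <;>
    · simp only [hd, rel_diag, hxy' k i hki, hyx' k i hki, hyy' k i hki, hxx' k i hki, rel_xy k i hki, rel_yx k i hki, rel_yy k i hki, rel_xx k i hki, hxy' k j hkj, hyx' k j hkj, hyy' k j hkj, hxx' k j hkj, rel_xy k j hkj, rel_yx k j hkj, rel_yy k j hkj, rel_xx k j hkj, hxy' i j hij, hyx' i j hij, hyy' i j hij, hxx' i j hij, rel_xy i j hij, rel_yx i j hij, rel_yy i j hij, rel_xx i j hij,
        mul_add, add_mul, sub_mul, mul_sub, smul_add, smul_sub, smul_smul,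
        smul_mul_assoc, mul_smul_comm, mul_assoc]
      module
  · constructor <;>
    · simp only [hd, rel_diag, hxy' k j hij, hyx' k j hij, hyy' k j hij, hxx' k j hij, rel_xy k j hij, rel_yx k j hij, rel_yy k j hij, rel_xx k j hij,
        mul_add, add_mul, sub_mul, mul_sub, smul_add, smul_sub, smul_smul,
        smul_mul_assoc, mul_smul_comm, mul_assoc]
      module
  · rcases lt_trichotomy k j with hkj | rfl | hjk
    · constructor <;>
      · simp only [hd, rel_diag, hxy' i k hik, hyx' i k hik, hyy' i k hik, hxx' i k hik, rel_xy i k hik, rel_yx i k hik, rel_yy i k hik, rel_xx i k hik, hxy' k j hkj, hyx' k j hkj, hyy' k j hkj, hxx' k j hkj, rel_xy k j hkj, rel_yx k j hkj, rel_yy k j hkj, rel_xx k j hkj, hxy' i j hij, hyx' i j hij, hyy' i j hij, hxx' i j hij, rel_xy i j hij, rel_yx i j hij, rel_yy i j hij, rel_xx i j hij,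
          mul_add, add_mul, sub_mul, mul_sub, smul_add, smul_sub, smul_smul,
          smul_mul_assoc, mul_smul_comm, mul_assoc]
        module
    · constructor <;>
      · simp only [hd, rel_diag, hxy' i k hij, hyx' i k hij, hyy' i k hij, hxx' i k hij, rel_xy i k hij, rel_yx i k hij, rel_yy i k hij, rel_xx i k hij,
          mul_add, add_mul, sub_mul, mul_sub, smul_add, smul_sub, smul_smul,
          smul_mul_assoc, mul_smul_comm, mul_assoc]
        module
    · have hik' : i < k := hij.trans hjk
      constructor <;>
      · simp only [hd, rel_diag, hxy' i j hij, hyx' i j hij, hyy' i j hij, hxx' i j hij, rel_xy i j hij, rel_yx i j hij, rel_yy i j hij, rel_xx i j hij, hxy' i k hik', hyx' i k hik', hyy' i k hik', hxx' i k hik', rel_xy i k hik', rel_yx i k hik', rel_yy i k hik', rel_xx i k hik', hxy' j k hjk, hyx' j k hjk, hyy' j k hjk, hxx' j k hjk, rel_xy j k hjk, rel_yx j k hjk, rel_yy j k hjk, rel_xx j k hjk,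
          mul_add, add_mul, sub_mul, mul_sub, smul_add, smul_sub, smul_smul,
          smul_mul_assoc, mul_smul_comm, mul_assoc]
        module

end

/-- The bracket `(ij)` is central in the `h`-deformed algebra `H_I`:
it commutes with every generator `x k` and `y k`. -/
theorem bracket_central {R : Type*} [Ring R] [Algebra ℂ R] {ι : Type*} [LinearOrder ι]
    (h : ℂ) (x y : ι → R)
    (rel_diag : ∀ i, x i * y i = y i * x i + h • (y i * y i))
    (rel_xy : ∀ i j, i < j → x j * y i = y i * x j + h • (y i * y j))
    (rel_yx : ∀ i j, i < j → y j * x i = x i * y j - h • (y i * y j))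
    (rel_yy : ∀ i j, i < j → y j * y i = y i * y j)
    (rel_xx : ∀ i j, i < j →
      x j * x i = x i * x j - h • (x i * y j) + h • (y i * x j) + (h * h) • (y i * y j))
    (i j k : ι) :
    (x i * y j - y i * x j - h • (y i * y j)) * x k =
      x k * (x i * y j - y i * x j - h • (y i * y j)) ∧
    (x i * y j - y i * x j - h • (y i * y j)) * y k =
      y k * (x i * y j - y i * x j - h • (y i * y j)) := by
  rcases lt_trichotomy i j with hij | rfl | hji
  · exact bracket_central_key h x y rel_diag rel_xy rel_yx rel_yy rel_xx hij k
  · have hB : x i * y i - y i * x i - h • (y i * y i) = 0 := by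
      rw [rel_diag i]; module
    rw [hB]
    simp
  · have hB : x i * y j - y i * x j - h • (y i * y j) =
        -(x j * y i - y j * x i - h • (y j * y i)) := by
      rw [rel_xy j i hji, rel_yx j i hji, rel_yy j i hji]
      module
    obtain ⟨h1, h2⟩ := bracket_central_key h x y rel_diag rel_xy rel_yx rel_yy rel_xx hji k
    rw [hB, neg_mul, neg_mul, h1, h2, mul_neg, mul_neg]
    exact ⟨rfl, rfl⟩
end

section
/- In the algebra H_I, the brackets satisfy the Grassmann–Plücker relation: (ij)(kl) + (ik)(lj) + (il)(jk) = 0 for all indices i, j, k, l in I. -/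
/-- The Grassmann–Plücker relation for the `h`-deformed brackets:
`(ij)(kl) + (ik)(lj) + (il)(jk) = 0`. -/
theorem bracket_plucker {R : Type*} [Ring R] [Algebra ℂ R] {ι : Type*} [LinearOrder ι]
    (h : ℂ) (x y : ι → R)
    (rel_diag : ∀ i, x i * y i = y i * x i + h • (y i * y i))
    (rel_xy : ∀ i j, i < j → x j * y i = y i * x j + h • (y i * y j))
    (rel_yx : ∀ i j, i < j → y j * x i = x i * y j - h • (y i * y j))
    (rel_yy : ∀ i j, i < j → y j * y i = y i * y j)
    (rel_xx : ∀ i j, i < j →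
      x j * x i = x i * x j - h • (x i * y j) + h • (y i * x j) + (h * h) • (y i * y j))
    (i j k l : ι) :
    (x i * y j - y i * x j - h • (y i * y j)) *
        (x k * y l - y k * x l - h • (y k * y l)) +
      (x i * y k - y i * x k - h • (y i * y k)) *
        (x l * y j - y l * x j - h • (y l * y j)) +
      (x i * y l - y i * x l - h • (y i * y l)) *
        (x j * y k - y j * x k - h • (y j * y k)) = 0 := by
  -- universal (order-free) forms of the relations
  have hyy : ∀ a b, y a * y b = y b * y a := by
    intro a b
    rcases lt_trichotomy a b with hab | rfl | hab
    · exact (rel_yy a b hab).symm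
    · rfl
    · exact rel_yy b a hab
  have hxy : ∀ a b, x a * y b = y b * x a + h • (y b * y a) := by
    intro a b
    rcases lt_trichotomy a b with hab | rfl | hab
    · rw [rel_yx a b hab, hyy b a]; module
    · exact rel_diag a
    · exact rel_xy b a hab
  have hyx : ∀ a b, y a * x b = x b * y a - h • (y a * y b) := by
    intro a b; rw [hxy b a]; module
  have hxxc : ∀ a b, x a * x b = x b * x a + h • (x a * y b) - h • (y a * x b)
      - (h * h) • (y a * y b) := by
    intro a b
    rcases lt_trichotomy a b with hab | rfl | hab
    · rw [rel_xx a b hab]; module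
    · rw [rel_diag a]; module
    · rw [rel_xx b a hab, hxy a b, hyx a b, hyy a b]; module
  -- relations in context (right-associated form)
  have hyyC : ∀ a b (z : R), y a * (y b * z) = y b * (y a * z) := by
    intro a b z; rw [← mul_assoc, hyy a b, mul_assoc]
  have hxyC : ∀ a b (z : R), x a * (y b * z) = y b * (x a * z) + h • (y b * (y a * z)) := by
    intro a b z; rw [← mul_assoc, hxy a b, add_mul, smul_mul_assoc, mul_assoc, mul_assoc]
  -- normal form of `y a * (bc)`
  have TB : ∀ a b c, y a * (x b * y c - y b * x c - h • (y b * y c)) =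
      y a * (y c * x b) + h • (y a * (y c * y b)) - y a * (y b * x c)
        - h • (y a * (y b * y c)) := by
    intro a b c
    simp only [mul_sub, mul_smul_comm]
    rw [hxy b c]
    simp only [mul_add, mul_smul_comm]
  -- first syzygy : `y a (bc) + y b (ca) + y c (ab) = 0`
  have Tzero : ∀ a b c,
      y a * (x b * y c - y b * x c - h • (y b * y c)) +
      y b * (x c * y a - y c * x a - h • (y c * y a)) +
      y c * (x a * y b - y a * x b - h • (y a * y b)) = 0 := by
    intro a b c
    rw [TB a b c, TB b c a, TB c a b]
    rw [hyy c b, hyy c a, hyy b a]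
    rw [hyyC a c (x b), hyyC b a (x c), hyyC c b (x a)]
    module
  -- normal form of `x a * (bc)`
  have UB : ∀ a b c, x a * (x b * y c - y b * x c - h • (y b * y c)) =
      y c * (x a * x b) - y b * (x a * x c)
      + h • (y c * (y a * x b)) + h • (y c * (y b * x a))
      - h • (y b * (y a * x c)) - h • (y b * (y c * x a))
      + (h * h) • (y c * (y b * y a)) + (h * h) • (y c * (y a * y b))
      - (h * h) • (y b * (y c * y a)) - (h * h) • (y b * (y a * y c)) := by
    intro a b c
    simp only [mul_sub, mul_smul_comm]
    rw [hxy b c]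
    simp only [mul_add, mul_smul_comm]
    rw [hxyC a c (x b), hxyC a c (y b), hxyC a b (x c), hxyC a b (y c)]
    rw [hxy a b, hxy a c]
    simp only [mul_add, mul_smul_comm, smul_add, smul_smul]
    module
  -- second syzygy : `x a (bc) + x b (ca) + x c (ab) = 0`
  have Uzero : ∀ a b c,
      x a * (x b * y c - y b * x c - h • (y b * y c)) +
      x b * (x c * y a - y c * x a - h • (y c * y a)) +
      x c * (x a * y b - y a * x b - h • (y a * y b)) = 0 := by
    intro a b c
    rw [UB a b c, UB b c a, UB c a b]
    rw [hxxc b a, hxxc c b, hxxc c a]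
    simp only [mul_add, mul_sub, mul_smul_comm]
    rw [hxy b a, hxy c b, hxy c a]
    simp only [mul_add, mul_smul_comm, smul_add, smul_smul, mul_sub, smul_sub]
    rw [hyyC c a (x b), hyyC c b (x a), hyyC a b (x c),
        hyyC c a (y b), hyyC c b (y a), hyyC a b (y c)]
    module
  -- assemble the Plücker relation
  have hT := Tzero j k l
  have hU := Uzero j k l
  calc
    (x i * y j - y i * x j - h • (y i * y j)) *
        (x k * y l - y k * x l - h • (y k * y l)) +
      (x i * y k - y i * x k - h • (y i * y k)) *
        (x l * y j - y l * x j - h • (y l * y j)) +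
      (x i * y l - y i * x l - h • (y i * y l)) *
        (x j * y k - y j * x k - h • (y j * y k))
      = x i * (y j * (x k * y l - y k * x l - h • (y k * y l)) +
              y k * (x l * y j - y l * x j - h • (y l * y j)) +
              y l * (x j * y k - y j * x k - h • (y j * y k)))
        - y i * (x j * (x k * y l - y k * x l - h • (y k * y l)) +
              x k * (x l * y j - y l * x j - h • (y l * y j)) +
              x l * (x j * y k - y j * x k - h • (y j * y k)))
        - h • (y i * (y j * (x k * y l - y k * x l - h • (y k * y l)) +
              y k * (x l * y j - y l * x j - h • (y l * y j)) +
              y l * (x j * y k - y j * x k - h • (y j * y k)))) := by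
        simp only [sub_mul, smul_mul_assoc, mul_assoc, mul_add]
        module
    _ = 0 := by rw [hT, hU]; simp
end

section
/- In the algebra H_I, the brackets commute with each other: (ij)(kl) = (kl)(ij) for all i, j, k, l in I, so the brackets generate a commutative subalgebra. -/
set_option maxHeartbeats 1000000 in
/-- The `h`-deformed brackets commute with each other:
`(ij)(kl) = (kl)(ij)` for all indices, so they generate a commutative subalgebra. -/
theorem bracket_comm {R : Type*} [Ring R] [Algebra ℂ R] {ι : Type*} [LinearOrder ι]
    (h : ℂ) (x y : ι → R)
    (rel_diag : ∀ i, x i * y i = y i * x i + h • (y i * y i))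
    (rel_xy : ∀ i j, i < j → x j * y i = y i * x j + h • (y i * y j))
    (rel_yx : ∀ i j, i < j → y j * x i = x i * y j - h • (y i * y j))
    (rel_yy : ∀ i j, i < j → y j * y i = y i * y j)
    (rel_xx : ∀ i j, i < j →
      x j * x i = x i * x j - h • (x i * y j) + h • (y i * x j) + (h * h) • (y i * y j))
    (i j k l : ι) :
    (x i * y j - y i * x j - h • (y i * y j)) *
        (x k * y l - y k * x l - h • (y k * y l)) =
      (x k * y l - y k * x l - h • (y k * y l)) *
        (x i * y j - y i * x j - h • (y i * y j)) := by
  have hyy : ∀ a b : ι, y a * y b = y b * y a := by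
    intro a b
    rcases lt_trichotomy a b with hab | rfl | hba
    · exact (rel_yy a b hab).symm
    · rfl
    · exact rel_yy b a hba
  have hxy : ∀ a b : ι, x a * y b = y b * x a + h • (y b * y a) := by
    intro a b
    rcases lt_trichotomy a b with hab | rfl | hba
    · rw [rel_yx a b hab, hyy b a]
      module
    · exact rel_diag a
    · exact rel_xy b a hba
  have hxx : ∀ a b : ι, x a * x b =
      x b * x a + h • (x a * y b) - h • (y a * x b) - (h*h) • (y a * y b) := by
    intro a b
    rcases lt_trichotomy a b with hab | rfl | hba
    · rw [rel_xx a b hab]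
      module
    · rw [rel_diag a]
      module
    · rw [rel_xx b a hba, hxy b a, hxy a b, hyy b a]
      module
  have zxy : ∀ a b : ι, x a * y b - (y b * x a + h • (y b * y a)) = 0 :=
    fun a b => sub_eq_zero_of_eq (hxy a b)
  have zyy : ∀ a b : ι, y a * y b - y b * y a = 0 :=
    fun a b => sub_eq_zero_of_eq (hyy a b)
  have zxx : ∀ a b : ι, x a * x b -
      (x b * x a + h • (x a * y b) - h • (y a * x b) - (h*h) • (y a * y b)) = 0 :=
    fun a b => sub_eq_zero_of_eq (hxx a b)
  have cy : ∀ m : ι, (x i * y j - y i * x j - h • (y i * y j)) * y m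
      = y m * (x i * y j - y i * x j - h • (y i * y j)) := by
    intro m
    have key : (x i * y j - y i * x j - h • (y i * y j)) * y m
        - y m * (x i * y j - y i * x j - h • (y i * y j)) =
          ((1 : ℂ)) • ((1:R) * (x i * y j - (y j * x i + h • (y j * y i))) * y m) +
          ((-1 : ℂ)) • (y i * (x j * y m - (y m * x j + h • (y m * y j))) * (1:R)) +
          ((-1 : ℂ)*h) • (y i * (y m * y j - y j * y m) * (1:R)) +
          ((1 : ℂ)) • (y j * (x i * y m - (y m * x i + h • (y m * y i))) * (1:R)) +
          ((1 : ℂ)*h) • ((1:R) * (y j * y i - y i * y j) * y m) +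
          ((1 : ℂ)*h) • (y j * (y m * y i - y i * y m) * (1:R)) +
          ((1 : ℂ)*h) • ((1:R) * (y j * y i - y i * y j) * y m) +
          ((-1 : ℂ)) • (y m * (x i * y j - (y j * x i + h • (y j * y i))) * (1:R)) +
          ((1 : ℂ)) • ((1:R) * (y m * y i - y i * y m) * x j) +
          ((1 : ℂ)*h) • ((1:R) * (y m * y i - y i * y m) * y j) +
          ((1 : ℂ)*h) • (y i * (y m * y j - y j * y m) * (1:R)) +
          ((-1 : ℂ)) • ((1:R) * (y m * y j - y j * y m) * x i) +
          ((-1 : ℂ)*h) • ((1:R) * (y m * y j - y j * y m) * y i) +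
          ((-1 : ℂ)*h) • (y j * (y m * y i - y i * y m) * (1:R)) +
          ((-1 : ℂ)*h) • ((1:R) * (y j * y i - y i * y j) * y m) := by
      noncomm_ring
      match_scalars <;> (try norm_num) <;> (try ring)
    simp only [zxy, zyy, zxx, mul_zero, zero_mul, smul_zero, add_zero, zero_add] at key
    exact sub_eq_zero.mp key
  have cx : ∀ m : ι, (x i * y j - y i * x j - h • (y i * y j)) * x m
      = x m * (x i * y j - y i * x j - h • (y i * y j)) := by
    intro m
    have key : (x i * y j - y i * x j - h • (y i * y j)) * x m
        - x m * (x i * y j - y i * x j - h • (y i * y j)) =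
          ((1 : ℂ)) • ((1:R) * (x i * y j - (y j * x i + h • (y j * y i))) * x m) +
          ((-1 : ℂ)) • ((1:R) * (x m * x i - (x i * x m + h • (x m * y i) - h • (y m * x i) - (h*h) • (y m * y i))) * y j) +
          ((-1 : ℂ)) • (x i * (x m * y j - (y j * x m + h • (y j * y m))) * (1:R)) +
          ((-1 : ℂ)) • ((1:R) * (x i * y j - (y j * x i + h • (y j * y i))) * x m) +
          ((-1 : ℂ)*h) • ((1:R) * (x i * y j - (y j * x i + h • (y j * y i))) * y m) +
          ((1 : ℂ)) • ((1:R) * (x m * y i - (y i * x m + h • (y i * y m))) * x j) +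
          ((1 : ℂ)) • (y i * (x m * x j - (x j * x m + h • (x m * y j) - h • (y m * x j) - (h*h) • (y m * y j))) * (1:R)) +
          ((1 : ℂ)*h) • (y i * (x m * y j - (y j * x m + h • (y j * y m))) * (1:R)) +
          ((-1 : ℂ)*h*h) • (y i * (y m * y j - y j * y m) * (1:R)) +
          ((-1 : ℂ)*h) • (y j * (x i * y m - (y m * x i + h • (y m * y i))) * (1:R)) +
          ((-1 : ℂ)*h*h) • ((1:R) * (y j * y i - y i * y j) * y m) +
          ((-1 : ℂ)*h*h) • (y j * (y m * y i - y i * y m) * (1:R)) +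
          ((-1 : ℂ)*h*h) • ((1:R) * (y j * y i - y i * y j) * y m) +
          ((1 : ℂ)*h) • (y m * (x i * y j - (y j * x i + h • (y j * y i))) * (1:R)) +
          ((1 : ℂ)*h*h) • ((1:R) * (y m * y i - y i * y m) * y j) +
          ((1 : ℂ)*h*h) • (y i * (y m * y j - y j * y m) * (1:R)) +
          ((1 : ℂ)*h) • ((1:R) * (y m * y j - y j * y m) * x i) +
          ((1 : ℂ)*h*h) • ((1:R) * (y m * y j - y j * y m) * y i) +
          ((1 : ℂ)*h*h) • (y j * (y m * y i - y i * y m) * (1:R)) +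
          ((1 : ℂ)*h*h) • ((1:R) * (y j * y i - y i * y j) * y m) := by
      noncomm_ring
      match_scalars <;> (try norm_num) <;> (try ring)
    simp only [zxy, zyy, zxx, mul_zero, zero_mul, smul_zero, add_zero, zero_add] at key
    exact sub_eq_zero.mp key
  have zy : ∀ m : ι, (x i * y j - y i * x j - h • (y i * y j)) * y m
      - y m * (x i * y j - y i * x j - h • (y i * y j)) = 0 :=
    fun m => sub_eq_zero_of_eq (cy m)
  have zx : ∀ m : ι, (x i * y j - y i * x j - h • (y i * y j)) * x m
      - x m * (x i * y j - y i * x j - h • (y i * y j)) = 0 :=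
    fun m => sub_eq_zero_of_eq (cx m)
  have key : (x i * y j - y i * x j - h • (y i * y j)) *
        (x k * y l - y k * x l - h • (y k * y l)) -
      (x k * y l - y k * x l - h • (y k * y l)) *
        (x i * y j - y i * x j - h • (y i * y j)) =
      ((x i * y j - y i * x j - h • (y i * y j)) * x k
        - x k * (x i * y j - y i * x j - h • (y i * y j))) * y l
      + x k * ((x i * y j - y i * x j - h • (y i * y j)) * y l
        - y l * (x i * y j - y i * x j - h • (y i * y j)))
      - (((x i * y j - y i * x j - h • (y i * y j)) * y k
        - y k * (x i * y j - y i * x j - h • (y i * y j))) * x l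
        + y k * ((x i * y j - y i * x j - h • (y i * y j)) * x l
          - x l * (x i * y j - y i * x j - h • (y i * y j))))
      - h • (((x i * y j - y i * x j - h • (y i * y j)) * y k
        - y k * (x i * y j - y i * x j - h • (y i * y j))) * y l
        + y k * ((x i * y j - y i * x j - h • (y i * y j)) * y l
          - y l * (x i * y j - y i * x j - h • (y i * y j)))) := by
    noncomm_ring
    match_scalars <;> (try norm_num) <;> (try ring)
  simp only [zy, zx, mul_zero, zero_mul, smul_zero, add_zero, zero_add, sub_zero] at key
  exact sub_eq_zero.mp key
end

section
/- In the algebra H_I, for distinct indices 1 < 2 the elements x_1 and x_2 have the common right multiple x_2 (x_1 - h y_1) = x_1 (x_2 - h y_2). -/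
/-- For `i < j` the generators `x i` and `x j` have the common right multiple
`x j * (x i - h • y i) = x i * (x j - h • y j)` in the `h`-deformed algebra. -/
theorem common_right_multiple {R : Type*} [Ring R] [Algebra ℂ R] {ι : Type*} [LinearOrder ι]
    (h : ℂ) (x y : ι → R)
    (rel_diag : ∀ i, x i * y i = y i * x i + h • (y i * y i))
    (rel_xy : ∀ i j, i < j → x j * y i = y i * x j + h • (y i * y j))
    (rel_yx : ∀ i j, i < j → y j * x i = x i * y j - h • (y i * y j))
    (rel_yy : ∀ i j, i < j → y j * y i = y i * y j)
    (rel_xx : ∀ i j, i < j →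
      x j * x i = x i * x j - h • (x i * y j) + h • (y i * x j) + (h * h) • (y i * y j))
    (i j : ι) (hij : i < j) :
    x j * (x i - h • y i) = x i * (x j - h • y j) := by
  rw [mul_sub, mul_sub, mul_smul_comm, mul_smul_comm, rel_xx i j hij, rel_xy i j hij]
  rw [smul_add, mul_smul]
  abel
end

section
/- In the quotient division ring Q_I of H_I, the noncommutative coordinates z_i := x_i y_i^{-1} + h/2 satisfy z_j z_i = z_i z_j + 2h(z_j - z_i) for all i, j; equivalently (z_j + h)(z_i - h) = (z_i + h)(z_j - h). -/
section Aux


variable {D : Type*} [DivisionRing D] [Algebra ℂ D]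
set_option linter.unusedSectionVars false

lemma key_lt (h : ℂ) (xi xj yi yj : D) (hyi : yi ≠ 0) (hyj : yj ≠ 0)
    (rdi : xi * yi = yi * xi + h • (yi * yi))
    (rdj : xj * yj = yj * xj + h • (yj * yj))
    (rxy : xj * yi = yi * xj + h • (yi * yj))
    (ryx : yj * xi = xi * yj - h • (yi * yj))
    (ryy : yj * yi = yi * yj)
    (rxx : xj * xi = xi * xj - h • (xi * yj) + h • (yi * xj) + (h * h) • (yi * yj)) :
    (xj * yj⁻¹) * (xi * yi⁻¹) =
      (xi * yi⁻¹) * (xj * yj⁻¹) + (2 * h) • (xj * yj⁻¹ - xi * yi⁻¹) := by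
  have cyi : yi * yi⁻¹ = 1 := mul_inv_cancel₀ hyi
  have cyi' : yi⁻¹ * yi = 1 := inv_mul_cancel₀ hyi
  have cyj : yj * yj⁻¹ = 1 := mul_inv_cancel₀ hyj
  have cyj' : yj⁻¹ * yj = 1 := inv_mul_cancel₀ hyj
  have hvyi : yj⁻¹ * yi = yi * yj⁻¹ := by
    apply mul_left_cancel₀ hyj; apply mul_right_cancel₀ hyj
    simp only [mul_add, add_mul, mul_assoc, smul_mul_assoc, mul_smul_comm,
      mul_inv_cancel_left₀ hyj, inv_mul_cancel_left₀ hyj, cyj, cyj', mul_one, one_mul, ryy]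
  have huyj : yi⁻¹ * yj = yj * yi⁻¹ := by
    apply mul_left_cancel₀ hyi; apply mul_right_cancel₀ hyi
    simp only [mul_add, add_mul, mul_assoc, smul_mul_assoc, mul_smul_comm,
      mul_inv_cancel_left₀ hyi, inv_mul_cancel_left₀ hyi, cyi, cyi', mul_one, one_mul, ryy]
  have hvu : yj⁻¹ * yi⁻¹ = yi⁻¹ * yj⁻¹ := by
    rw [← mul_inv_rev, ← mul_inv_rev, ryy]
  have hvxi : yj⁻¹ * xi = xi * yj⁻¹ + h • (yi * yj⁻¹) := by
    apply mul_left_cancel₀ hyj; apply mul_right_cancel₀ hyj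
    simp only [mul_add, add_mul, mul_assoc, smul_mul_assoc, mul_smul_comm,
      mul_inv_cancel_left₀ hyj, inv_mul_cancel_left₀ hyj, cyj, cyj', mul_one, one_mul,
      ryx, ryy]
    abel
  have hvxj : yj⁻¹ * xj = xj * yj⁻¹ + h • 1 := by
    apply mul_left_cancel₀ hyj; apply mul_right_cancel₀ hyj
    simp only [mul_add, add_mul, mul_assoc, smul_mul_assoc, mul_smul_comm,
      mul_inv_cancel_left₀ hyj, inv_mul_cancel_left₀ hyj, cyj, cyj', mul_one, one_mul,
      rdj]
  have huxi : yi⁻¹ * xi = xi * yi⁻¹ + h • 1 := by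
    apply mul_left_cancel₀ hyi; apply mul_right_cancel₀ hyi
    simp only [mul_add, add_mul, mul_assoc, smul_mul_assoc, mul_smul_comm,
      mul_inv_cancel_left₀ hyi, inv_mul_cancel_left₀ hyi, cyi, cyi', mul_one, one_mul,
      rdi]
  have huxj : yi⁻¹ * xj = xj * yi⁻¹ + h • (yj * yi⁻¹) := by
    apply mul_left_cancel₀ hyi; apply mul_right_cancel₀ hyi
    simp only [mul_add, add_mul, mul_assoc, smul_mul_assoc, mul_smul_comm,
      mul_inv_cancel_left₀ hyi, inv_mul_cancel_left₀ hyi, cyi, cyi', mul_one, one_mul,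
      rxy, ryy]
  have hyixju : yi * (xj * yi⁻¹) = xj - h • yj := by
    have := congrArg (fun t => yi * t) huxj
    simp only [← mul_assoc, cyi, one_mul] at this
    rw [mul_add, mul_smul_comm, ← mul_assoc yi yj, ← ryy, mul_assoc, cyi, mul_one] at this
    rw [eq_sub_iff_add_eq]; exact this.symm
  have hyjxiv : yj * (xi * yj⁻¹) = xi - h • yi := by
    have := congrArg (fun t => yj * t) hvxi
    simp only [← mul_assoc, cyj, one_mul] at this
    rw [mul_add, mul_smul_comm, ← mul_assoc yj yi, ryy, mul_assoc, cyj, mul_one] at this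
    rw [eq_sub_iff_add_eq]; exact this.symm
  have Hxx : ∀ t : D, xj * (xi * t) = (xi * xj - h • (xi * yj) + h • (yi * xj) + (h * h) • (yi * yj)) * t := fun t => by rw [← mul_assoc, rxx]
  have Hxy : ∀ t : D, xj * (yi * t) = (yi * xj + h • (yi * yj)) * t := fun t => by rw [← mul_assoc, rxy]
  have Hdi : ∀ t : D, xi * (yi * t) = (yi * xi + h • (yi * yi)) * t := fun t => by rw [← mul_assoc, rdi]
  have Hdj : ∀ t : D, xj * (yj * t) = (yj * xj + h • (yj * yj)) * t := fun t => by rw [← mul_assoc, rdj]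
  have Hyy : ∀ t : D, yj * (yi * t) = (yi * yj) * t := fun t => by rw [← mul_assoc, ryy]
  have Hyx : ∀ t : D, yj * (xi * t) = (xi * yj - h • (yi * yj)) * t := fun t => by rw [← mul_assoc, ryx]
  have Hvxi : ∀ t : D, yj⁻¹ * (xi * t) = (xi * yj⁻¹ + h • (yi * yj⁻¹)) * t := fun t => by rw [← mul_assoc, hvxi]
  have Hvxj : ∀ t : D, yj⁻¹ * (xj * t) = (xj * yj⁻¹ + h • 1) * t := fun t => by rw [← mul_assoc, hvxj]
  have Huxi : ∀ t : D, yi⁻¹ * (xi * t) = (xi * yi⁻¹ + h • 1) * t := fun t => by rw [← mul_assoc, huxi]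
  have Huxj : ∀ t : D, yi⁻¹ * (xj * t) = (xj * yi⁻¹ + h • (yj * yi⁻¹)) * t := fun t => by rw [← mul_assoc, huxj]
  have Hvyi : ∀ t : D, yj⁻¹ * (yi * t) = (yi * yj⁻¹) * t := fun t => by rw [← mul_assoc, hvyi]
  have Huyj : ∀ t : D, yi⁻¹ * (yj * t) = (yj * yi⁻¹) * t := fun t => by rw [← mul_assoc, huyj]
  have Hvu : ∀ t : D, yj⁻¹ * (yi⁻¹ * t) = (yi⁻¹ * yj⁻¹) * t := fun t => by rw [← mul_assoc, hvu]
  have Hcji : ∀ t : D, yi * (xj * (yi⁻¹ * t)) = (xj - h • yj) * t := fun t => by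
    rw [← mul_assoc xj, ← mul_assoc yi, hyixju]
  have Hcij : ∀ t : D, yj * (xi * (yj⁻¹ * t)) = (xi - h • yi) * t := fun t => by
    rw [← mul_assoc xi, ← mul_assoc yj, hyjxiv]
  have H1 : ∀ t : D, yj * (yi⁻¹ * (yj⁻¹ * t)) = yi⁻¹ * t := fun t => by
    rw [← mul_assoc yj, ← huyj, mul_assoc, mul_inv_cancel_left₀ hyj]
  have H2 : ∀ t : D, yi * (yj * (yi⁻¹ * t)) = yj * t := fun t => by
    rw [← mul_assoc yi, ← ryy, mul_assoc, mul_inv_cancel_left₀ hyi]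
  have H1' : yj * (yi⁻¹ * yj⁻¹) = yi⁻¹ := by
    rw [← mul_assoc yj, ← huyj, mul_assoc, cyj, mul_one]
  have H2' : yi * (yj * yi⁻¹) = yj := by
    rw [← mul_assoc yi, ← ryy, mul_assoc, cyi, mul_one]
  simp only [mul_add, add_mul, mul_sub, sub_mul, smul_mul_assoc, mul_smul_comm, smul_add,
    smul_sub, smul_smul, mul_assoc, mul_one, one_mul, Hxx, Hxy, Hdi, Hdj, Hyy, Hyx, Hvxi,
    Hvxj, Huxi, Huxj, Hvyi, Huyj, Hvu, Hcji, Hcij, H1, H2, H1', H2',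
    inv_mul_cancel_left₀ hyi, inv_mul_cancel_left₀ hyj,
    mul_inv_cancel_left₀ hyi, mul_inv_cancel_left₀ hyj, cyi, cyi', cyj, cyj',
    rxx, rxy, rdi, rdj, ryy, ryx, hvxi, hvxj, huxi, huxj, hvyi, huyj, hvu, hyixju, hyjxiv]
  module

lemma conj1_core (s : ℂ) (a b d : D) (hda : d * a = a * d) (hdb : d * b = b * d)
    (hkey : a * b = b * a + s • (a - b)) :
    (a + d) * (b + d) = (b + d) * (a + d) + s • ((a + d) - (b + d)) := by
  have EL : (a + d) * (b + d) = a * b + (a * d + d * b + d * d) := by noncomm_ring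
  have ER : (b + d) * (a + d) = b * a + (b * d + d * a + d * d) := by noncomm_ring
  rw [EL, ER, hkey, hda, hdb, add_sub_add_right_eq_sub]; abel

lemma conj2_core (a b d e : D) (hda : d * a = a * d) (hdb : d * b = b * d)
    (hea : e * a = a * e) (heb : e * b = b * e)
    (hkey : a * b = b * a + (e + e) * (a - b)) :
    (a + d + e) * (b + d - e) = (b + d + e) * (a + d - e) := by
  have EL : (a + d + e) * (b + d - e) =
      a * b + (a * d + d * b + e * b + d * d + e * d - (a * e + d * e + e * e)) := by noncomm_ring
  have ER : (b + d + e) * (a + d - e) =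
      b * a + (b * d + d * a + e * a + d * d + e * d - (b * e + d * e + e * e)) := by noncomm_ring
  have hexp : (e + e) * (a - b) = a * e + a * e - b * e - b * e := by
    rw [add_mul, mul_sub, hea, heb]; abel
  rw [EL, ER, hkey, hexp, hda, hdb, hea, heb]; abel


end Aux

/-- In the quotient division ring of `H_I` (here: any division ring containing
elements satisfying the relations, with `y i ≠ 0`), the noncommutative coordinates
`z i = x i * (y i)⁻¹ + h/2` satisfy `z j * z i = z i * z j + 2h (z j - z i)`,
equivalently `(z j + h)(z i - h) = (z i + h)(z j - h)`. -/
theorem coordinate_commutation {D : Type*} [DivisionRing D] [Algebra ℂ D] {ι : Type*} [LinearOrder ι]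
    (h : ℂ) (x y : ι → D)
    (rel_diag : ∀ i, x i * y i = y i * x i + h • (y i * y i))
    (rel_xy : ∀ i j, i < j → x j * y i = y i * x j + h • (y i * y j))
    (rel_yx : ∀ i j, i < j → y j * x i = x i * y j - h • (y i * y j))
    (rel_yy : ∀ i j, i < j → y j * y i = y i * y j)
    (rel_xx : ∀ i j, i < j →
      x j * x i = x i * x j - h • (x i * y j) + h • (y i * x j) + (h * h) • (y i * y j))
    (hy : ∀ i, y i ≠ 0)
    (i j : ι) :
    (x j * (y j)⁻¹ + algebraMap ℂ D (h / 2)) * (x i * (y i)⁻¹ + algebraMap ℂ D (h / 2)) =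
      (x i * (y i)⁻¹ + algebraMap ℂ D (h / 2)) * (x j * (y j)⁻¹ + algebraMap ℂ D (h / 2)) +
        (2 * h) • ((x j * (y j)⁻¹ + algebraMap ℂ D (h / 2)) -
          (x i * (y i)⁻¹ + algebraMap ℂ D (h / 2))) ∧
    ((x j * (y j)⁻¹ + algebraMap ℂ D (h / 2)) + algebraMap ℂ D h) *
        ((x i * (y i)⁻¹ + algebraMap ℂ D (h / 2)) - algebraMap ℂ D h) =
      ((x i * (y i)⁻¹ + algebraMap ℂ D (h / 2)) + algebraMap ℂ D h) *
        ((x j * (y j)⁻¹ + algebraMap ℂ D (h / 2)) - algebraMap ℂ D h) := by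
  have key : ∀ i j : ι, (x j * (y j)⁻¹) * (x i * (y i)⁻¹) =
      (x i * (y i)⁻¹) * (x j * (y j)⁻¹) + (2 * h) • (x j * (y j)⁻¹ - x i * (y i)⁻¹) := by
    intro i j
    rcases lt_trichotomy i j with hij | rfl | hji
    · exact key_lt h (x i) (x j) (y i) (y j) (hy i) (hy j) (rel_diag i) (rel_diag j)
        (rel_xy i j hij) (rel_yx i j hij) (rel_yy i j hij) (rel_xx i j hij)
    · simp
    · have e := key_lt h (x j) (x i) (y j) (y i) (hy j) (hy i) (rel_diag j) (rel_diag i)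
        (rel_xy j i hji) (rel_yx j i hji) (rel_yy j i hji) (rel_xx j i hji)
      rw [e, smul_sub, smul_sub]; abel
  constructor
  · exact conj1_core (2 * h) _ _ _ (Algebra.commutes _ _) (Algebra.commutes _ _) (key i j)
  · have k2 : (x j * (y j)⁻¹) * (x i * (y i)⁻¹) =
        (x i * (y i)⁻¹) * (x j * (y j)⁻¹) +
          (algebraMap ℂ D h + algebraMap ℂ D h) * (x j * (y j)⁻¹ - x i * (y i)⁻¹) := by
      rw [key i j, Algebra.smul_def, map_mul, map_ofNat, two_mul]
    exact conj2_core _ _ _ _ (Algebra.commutes _ _) (Algebra.commutes _ _)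
      (Algebra.commutes _ _) (Algebra.commutes _ _) k2
end

section
/- The h-deformed algebra H_n on generators x_0, y_0, ..., x_n, y_n is an iterated Ore extension of the base field: there is a tower C ⊂ H_0' ⊂ H_0 ⊂ ... ⊂ H_n' ⊂ H_n in which each step adjoins one generator y_j (with zero derivation and automorphism σ(x_i) = x_i - h y_i, σ(y_i) = y_i for i < j) or one generator x_j (with automorphism σ(x_i) = x_i + h y_i, σ(y_i) = y_i, σ(y_j) = y_j and σ-derivation δ(x_i) = -h(x_i - h y_i) y_j, δ(y_i) = h y_i y_j, δ(y_j) = h y_j^2). -/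
/-- Generators of the `h`-deformed algebra: `(i, false)` is `x_i`, `(i, true)` is `y_i`. -/
abbrev HGen (n : ℕ) := Fin (n + 1) × Bool

/-- The defining relations of the `h`-deformed algebra `H_n`. -/
inductive HRel (h : ℂ) (n : ℕ) :
    FreeAlgebra ℂ (HGen n) → FreeAlgebra ℂ (HGen n) → Prop
  | diag (i : Fin (n + 1)) :
      HRel h n (FreeAlgebra.ι ℂ (i, false) * FreeAlgebra.ι ℂ (i, true))
        (FreeAlgebra.ι ℂ (i, true) * FreeAlgebra.ι ℂ (i, false) +
          h • (FreeAlgebra.ι ℂ (i, true) * FreeAlgebra.ι ℂ (i, true)))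
  | xy {i j : Fin (n + 1)} (hij : i < j) :
      HRel h n (FreeAlgebra.ι ℂ (j, false) * FreeAlgebra.ι ℂ (i, true))
        (FreeAlgebra.ι ℂ (i, true) * FreeAlgebra.ι ℂ (j, false) +
          h • (FreeAlgebra.ι ℂ (i, true) * FreeAlgebra.ι ℂ (j, true)))
  | yx {i j : Fin (n + 1)} (hij : i < j) :
      HRel h n (FreeAlgebra.ι ℂ (j, true) * FreeAlgebra.ι ℂ (i, false))
        (FreeAlgebra.ι ℂ (i, false) * FreeAlgebra.ι ℂ (j, true) -
          h • (FreeAlgebra.ι ℂ (i, true) * FreeAlgebra.ι ℂ (j, true)))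
  | yy {i j : Fin (n + 1)} (hij : i < j) :
      HRel h n (FreeAlgebra.ι ℂ (j, true) * FreeAlgebra.ι ℂ (i, true))
        (FreeAlgebra.ι ℂ (i, true) * FreeAlgebra.ι ℂ (j, true))
  | xx {i j : Fin (n + 1)} (hij : i < j) :
      HRel h n (FreeAlgebra.ι ℂ (j, false) * FreeAlgebra.ι ℂ (i, false))
        (FreeAlgebra.ι ℂ (i, false) * FreeAlgebra.ι ℂ (j, false) -
          h • (FreeAlgebra.ι ℂ (i, false) * FreeAlgebra.ι ℂ (j, true)) +
          h • (FreeAlgebra.ι ℂ (i, true) * FreeAlgebra.ι ℂ (j, false)) +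
          (h * h) • (FreeAlgebra.ι ℂ (i, true) * FreeAlgebra.ι ℂ (j, true)))

/-- The `h`-deformed algebra `H_n` on generators `x_0, y_0, ..., x_n, y_n`. -/
abbrev HAlg (h : ℂ) (n : ℕ) := RingQuot (HRel h n)

/-- The images of the generators `x_i` in `H_n`. -/
noncomputable def Xg (h : ℂ) (n : ℕ) (i : Fin (n + 1)) : HAlg h n :=
  RingQuot.mkAlgHom ℂ (HRel h n) (FreeAlgebra.ι ℂ (i, false))

/-- The images of the generators `y_i` in `H_n`. -/
noncomputable def Yg (h : ℂ) (n : ℕ) (i : Fin (n + 1)) : HAlg h n :=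
  RingQuot.mkAlgHom ℂ (HRel h n) (FreeAlgebra.ι ℂ (i, true))

/-- The subalgebra `H_{j-1}` generated by the `x_i, y_i` with `i < j`. -/
noncomputable def Hprev (h : ℂ) (n : ℕ) (j : Fin (n + 1)) : Subalgebra ℂ (HAlg h n) :=
  Algebra.adjoin ℂ {a | ∃ i < j, a = Xg h n i ∨ a = Yg h n i}

/-- The subalgebra `H_j'` generated by `H_{j-1}` and `y_j`. -/
noncomputable def Hmid (h : ℂ) (n : ℕ) (j : Fin (n + 1)) : Subalgebra ℂ (HAlg h n) :=
  Algebra.adjoin ℂ ({a | ∃ i < j, a = Xg h n i ∨ a = Yg h n i} ∪ {Yg h n j})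

/-- The subalgebra `H_j` generated by `H_j'` and `x_j`. -/
noncomputable def Hfull (h : ℂ) (n : ℕ) (j : Fin (n + 1)) : Subalgebra ℂ (HAlg h n) :=
  Algebra.adjoin ℂ ({a | ∃ i < j, a = Xg h n i ∨ a = Yg h n i} ∪ {Yg h n j, Xg h n j})

/-- `S` is an Ore extension of the subalgebra `R` by the element `t` with
endomorphism `σ` and `σ`-derivation `δ`: `δ` satisfies the `σ`-Leibniz rule,
`t * a = σ a * t + δ a` for `a ∈ R`, and `S` is freely generated over `R` by `t`
(every element of `S` is uniquely a finite sum `∑ aₘ tᵐ` with `aₘ ∈ R`). -/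
def IsOreExtensionStep {A : Type*} [Ring A] [Algebra ℂ A]
    (R S : Subalgebra ℂ A) (t : A) (σ : R →ₐ[ℂ] R) (δ : R →ₗ[ℂ] R) : Prop :=
  R ≤ S ∧ t ∈ S ∧
  (∀ a b : R, δ (a * b) = δ a * b + σ a * δ b) ∧
  (∀ a : R, t * (a : A) = (σ a : A) * t + (δ a : A)) ∧
  (∀ s : S, ∃! c : ℕ →₀ R, (s : A) = c.sum fun m a => (a : A) * t ^ m)

namespace HW
variable {h : ℂ} {n : ℕ}

lemma mk_rel {a b : FreeAlgebra ℂ (HGen n)} (r : HRel h n a b) :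
    RingQuot.mkAlgHom ℂ (HRel h n) a = RingQuot.mkAlgHom ℂ (HRel h n) b :=
  RingQuot.mkAlgHom_rel ℂ r

lemma rel_diag (i : Fin (n+1)) :
    Xg h n i * Yg h n i = Yg h n i * Xg h n i + h • (Yg h n i * Yg h n i) := by
  simpa [Xg, Yg, map_mul, map_add] using mk_rel (HRel.diag (h := h) (n := n) i)

lemma rel_xy {i j : Fin (n+1)} (hij : i < j) :
    Xg h n j * Yg h n i = Yg h n i * Xg h n j + h • (Yg h n i * Yg h n j) := by
  simpa [Xg, Yg, map_mul, map_add] using mk_rel (HRel.xy (h := h) (n := n) hij)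

lemma rel_yx {i j : Fin (n+1)} (hij : i < j) :
    Yg h n j * Xg h n i = Xg h n i * Yg h n j - h • (Yg h n i * Yg h n j) := by
  simpa [Xg, Yg, map_mul, map_sub] using mk_rel (HRel.yx (h := h) (n := n) hij)

lemma rel_yy {i j : Fin (n+1)} (hij : i < j) :
    Yg h n j * Yg h n i = Yg h n i * Yg h n j := by
  simpa [Xg, Yg, map_mul] using mk_rel (HRel.yy (h := h) (n := n) hij)

lemma rel_xx {i j : Fin (n+1)} (hij : i < j) :
    Xg h n j * Xg h n i = Xg h n i * Xg h n j - h • (Xg h n i * Yg h n j)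
      + h • (Yg h n i * Xg h n j) + (h*h) • (Yg h n i * Yg h n j) := by
  simpa [Xg, Yg, map_mul, map_add, map_sub] using mk_rel (HRel.xx (h := h) (n := n) hij)

/-- global endomorphism `x_i ↦ x_i + c y_i`, `y_i ↦ y_i`. -/
noncomputable def phi (h : ℂ) (n : ℕ) (c : ℂ) : HAlg h n →ₐ[ℂ] HAlg h n :=
  RingQuot.liftAlgHom ℂ
    ⟨FreeAlgebra.lift ℂ (fun p => if p.2 then Yg h n p.1 else Xg h n p.1 + c • Yg h n p.1), by
      rintro x y (i | @⟨i, j, hij⟩ | @⟨i, j, hij⟩ | @⟨i, j, hij⟩ | @⟨i, j, hij⟩) <;>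
        simp only [map_mul, map_add, map_sub, map_smul, FreeAlgebra.lift_ι_apply, if_true,
          if_false, Bool.false_eq_true, ite_false, ite_true,
          mul_add, add_mul, sub_mul, mul_sub, smul_mul_assoc, mul_smul_comm,
          smul_smul, smul_add, smul_sub]
      · rw [rel_diag]; module
      · rw [rel_xy hij, rel_yy hij]; module
      · rw [rel_yx hij, rel_yy hij]; module
      · rw [rel_yy hij]
      · rw [rel_xx hij, rel_xy hij, rel_yx hij, rel_yy hij]
        simp only [smul_add, smul_sub, smul_smul]
        module
      ⟩

@[simp] lemma phi_X (c : ℂ) (i : Fin (n+1)) :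
    phi h n c (Xg h n i) = Xg h n i + c • Yg h n i := by
  simp [phi, Xg, Yg, RingQuot.liftAlgHom_mkAlgHom_apply, FreeAlgebra.lift_ι_apply]

@[simp] lemma phi_Y (c : ℂ) (i : Fin (n+1)) :
    phi h n c (Yg h n i) = Yg h n i := by
  simp [phi, Yg, RingQuot.liftAlgHom_mkAlgHom_apply, FreeAlgebra.lift_ι_apply]

end HW

namespace HW
variable {h : ℂ} {n : ℕ}

lemma mem_prev_X {i j : Fin (n+1)} (hij : i < j) : Xg h n i ∈ Hprev h n j :=
  Algebra.subset_adjoin ⟨i, hij, Or.inl rfl⟩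

lemma mem_prev_Y {i j : Fin (n+1)} (hij : i < j) : Yg h n i ∈ Hprev h n j :=
  Algebra.subset_adjoin ⟨i, hij, Or.inr rfl⟩

lemma prev_le_mid (j : Fin (n+1)) : Hprev h n j ≤ Hmid h n j :=
  Algebra.adjoin_mono Set.subset_union_left

lemma mid_le_full (j : Fin (n+1)) : Hmid h n j ≤ Hfull h n j := by
  apply Algebra.adjoin_mono
  apply Set.union_subset_union_right
  intro a ha; exact Or.inl ha

lemma mem_mid_Yj (j : Fin (n+1)) : Yg h n j ∈ Hmid h n j :=
  Algebra.subset_adjoin (Or.inr rfl)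

lemma mem_full_Xj (j : Fin (n+1)) : Xg h n j ∈ Hfull h n j :=
  Algebra.subset_adjoin (Or.inr (Or.inr rfl))

lemma phi_mem_prev (c : ℂ) {j : Fin (n+1)} {a : HAlg h n} (ha : a ∈ Hprev h n j) :
    phi h n c a ∈ Hprev h n j := by
  induction ha using Algebra.adjoin_induction with
  | mem x hx =>
    obtain ⟨i, hij, rfl | rfl⟩ := hx
    · rw [phi_X]; exact add_mem (mem_prev_X hij) (SMulMemClass.smul_mem c (mem_prev_Y hij))
    · rw [phi_Y]; exact mem_prev_Y hij
  | algebraMap r => rw [AlgHom.commutes]; exact algebraMap_mem _ r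
  | add x y _ _ hx hy => rw [map_add]; exact add_mem hx hy
  | mul x y _ _ hx hy => rw [map_mul]; exact mul_mem hx hy

lemma phi_mem_mid (c : ℂ) {j : Fin (n+1)} {a : HAlg h n} (ha : a ∈ Hmid h n j) :
    phi h n c a ∈ Hmid h n j := by
  induction ha using Algebra.adjoin_induction with
  | mem x hx =>
    rcases hx with ⟨i, hij, rfl | rfl⟩ | rfl
    · rw [phi_X]
      exact add_mem (prev_le_mid j (mem_prev_X hij))
        (SMulMemClass.smul_mem c (prev_le_mid j (mem_prev_Y hij)))
    · rw [phi_Y]; exact prev_le_mid j (mem_prev_Y hij)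
    · rw [phi_Y]; exact mem_mid_Yj j
  | algebraMap r => rw [AlgHom.commutes]; exact algebraMap_mem _ r
  | add x y _ _ hx hy => rw [map_add]; exact add_mem hx hy
  | mul x y _ _ hx hy => rw [map_mul]; exact mul_mem hx hy

/-- The Ore relation for adjoining `y_j`. -/
lemma ore_mid {j : Fin (n+1)} {a : HAlg h n} (ha : a ∈ Hprev h n j) :
    Yg h n j * a = phi h n (-h) a * Yg h n j := by
  induction ha using Algebra.adjoin_induction with
  | mem x hx =>
    obtain ⟨i, hij, rfl | rfl⟩ := hx
    · rw [phi_X, rel_yx hij, add_mul, smul_mul_assoc]; module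
    · rw [phi_Y, rel_yy hij]
  | algebraMap r => rw [AlgHom.commutes]; exact (Algebra.commutes r _).symm
  | add x y _ _ hx hy => rw [mul_add, map_add, add_mul, hx, hy]
  | mul x y _ _ hx hy => rw [← mul_assoc, hx, mul_assoc, hy, map_mul, mul_assoc]

/-- The `σ`-derivation for adjoining `x_j` (defined on all of `H`). -/
noncomputable def dlt (h : ℂ) (n : ℕ) (j : Fin (n+1)) (a : HAlg h n) : HAlg h n :=
  Xg h n j * a - phi h n h a * Xg h n j

lemma ore_full (j : Fin (n+1)) (a : HAlg h n) :
    Xg h n j * a = phi h n h a * Xg h n j + dlt h n j a := by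
  rw [dlt, add_sub_cancel]

lemma dlt_add (j : Fin (n+1)) (a b : HAlg h n) :
    dlt h n j (a + b) = dlt h n j a + dlt h n j b := by
  simp only [dlt, map_add, mul_add, add_mul]; abel

lemma dlt_smul (j : Fin (n+1)) (r : ℂ) (a : HAlg h n) :
    dlt h n j (r • a) = r • dlt h n j a := by
  simp only [dlt, map_smul, mul_smul_comm, smul_mul_assoc, smul_sub]

lemma dlt_mul (j : Fin (n+1)) (a b : HAlg h n) :
    dlt h n j (a * b) = dlt h n j a * b + phi h n h a * dlt h n j b := by
  simp only [dlt, map_mul, mul_sub, sub_mul, mul_assoc]; abel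

lemma dlt_X {i j : Fin (n+1)} (hij : i < j) :
    dlt h n j (Xg h n i) = -(h • ((Xg h n i - h • Yg h n i) * Yg h n j)) := by
  rw [dlt, phi_X, rel_xx hij]
  simp only [sub_mul, add_mul, smul_mul_assoc, smul_sub, smul_smul]
  module

lemma dlt_Y {i j : Fin (n+1)} (hij : i < j) :
    dlt h n j (Yg h n i) = h • (Yg h n i * Yg h n j) := by
  rw [dlt, phi_Y, rel_xy hij, add_sub_cancel_left]

lemma dlt_Yj (j : Fin (n+1)) :
    dlt h n j (Yg h n j) = h • (Yg h n j * Yg h n j) := by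
  rw [dlt, phi_Y, rel_diag, add_sub_cancel_left]

lemma dlt_mem_mid {j : Fin (n+1)} {a : HAlg h n} (ha : a ∈ Hmid h n j) :
    dlt h n j a ∈ Hmid h n j := by
  induction ha using Algebra.adjoin_induction with
  | mem x hx =>
    rcases hx with ⟨i, hij, rfl | rfl⟩ | rfl
    · rw [dlt_X hij]
      refine neg_mem (SMulMemClass.smul_mem h (mul_mem (sub_mem ?_ ?_) (mem_mid_Yj j)))
      · exact prev_le_mid j (mem_prev_X hij)
      · exact SMulMemClass.smul_mem h (prev_le_mid j (mem_prev_Y hij))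
    · rw [dlt_Y hij]
      exact SMulMemClass.smul_mem h (mul_mem (prev_le_mid j (mem_prev_Y hij)) (mem_mid_Yj j))
    · rw [dlt_Yj]
      exact SMulMemClass.smul_mem h (mul_mem (mem_mid_Yj j) (mem_mid_Yj j))
  | algebraMap r =>
    have : dlt h n j ((algebraMap ℂ (HAlg h n)) r) = 0 := by
      rw [dlt, AlgHom.commutes, Algebra.commutes, sub_self]
    rw [this]; exact zero_mem _
  | add x y _ _ hx hy => rw [dlt_add]; exact add_mem hx hy
  | mul x y hxm hym hx hy =>
    rw [dlt_mul]
    exact add_mem (mul_mem hx hym) (mul_mem (phi_mem_mid h hxm) hy)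

end HW

namespace HW
variable {h : ℂ} {n : ℕ}

/-- The set of elements of the form `∑ aₘ tᵐ` with `aₘ ∈ R`, as a submodule. -/
noncomputable def rep (R : Subalgebra ℂ (HAlg h n)) (t : HAlg h n) : Submodule ℂ (HAlg h n) where
  carrier := {z | ∃ c : ℕ →₀ R, z = c.sum fun m a => (a : HAlg h n) * t ^ m}
  zero_mem' := ⟨0, by simp⟩
  add_mem' := by
    rintro _ _ ⟨c, rfl⟩ ⟨d, rfl⟩
    exact ⟨c + d, (Finsupp.sum_add_index' (by intro a; simp) (by intros; push_cast; rw [add_mul])).symm⟩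
  smul_mem' := by
    rintro r _ ⟨c, rfl⟩
    refine ⟨r • c, ?_⟩
    rw [Finsupp.sum_smul_index' (by intro m; simp), Finsupp.smul_sum]
    congr 1; ext m a
    rw [SetLike.val_smul, smul_mul_assoc]

lemma rep_single {R : Subalgebra ℂ (HAlg h n)} {t : HAlg h n} (a : R) (m : ℕ) :
    (a : HAlg h n) * t ^ m ∈ rep R t :=
  ⟨Finsupp.single m a, by rw [Finsupp.sum_single_index (by simp)]⟩

lemma rep_mul_left {R : Subalgebra ℂ (HAlg h n)} {t z : HAlg h n} (a : R)
    (hz : z ∈ rep R t) : (a : HAlg h n) * z ∈ rep R t := by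
  obtain ⟨c, rfl⟩ := hz
  rw [Finsupp.mul_sum]
  refine Submodule.sum_mem _ fun m _ => ?_
  dsimp only
  rw [← mul_assoc]
  exact rep_single (a * c m) m

variable {R : Subalgebra ℂ (HAlg h n)} {t : HAlg h n}
  (hOre : ∀ a : R, ∃ b d : R, t * (a : HAlg h n) = (b : HAlg h n) * t + d)

include hOre

lemma rep_t_mul {z : HAlg h n} (hz : z ∈ rep R t) : t * z ∈ rep R t := by
  obtain ⟨c, rfl⟩ := hz
  rw [Finsupp.mul_sum]
  refine Submodule.sum_mem _ fun m _ => ?_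
  obtain ⟨b, d, hbd⟩ := hOre (c m)
  dsimp only
  rw [← mul_assoc, hbd, add_mul, mul_assoc, ← pow_succ']
  exact add_mem (rep_single b (m + 1)) (rep_single d m)

lemma rep_pow_mul {z : HAlg h n} (k : ℕ) (hz : z ∈ rep R t) : t ^ k * z ∈ rep R t := by
  induction k with
  | zero => simpa using hz
  | succ k ih => rw [pow_succ', mul_assoc]; exact rep_t_mul hOre (ih)

lemma rep_mul {z w : HAlg h n} (hz : z ∈ rep R t) (hw : w ∈ rep R t) :
    z * w ∈ rep R t := by
  obtain ⟨c, rfl⟩ := hz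
  rw [Finsupp.sum_mul]
  refine Submodule.sum_mem _ fun m _ => ?_
  dsimp only
  rw [mul_assoc]
  exact rep_mul_left (c m) (rep_pow_mul hOre m hw)

end HW

namespace HW
variable {h : ℂ} {n : ℕ}

lemma oreY (j : Fin (n+1)) : ∀ a : Hprev h n j, ∃ b d : Hprev h n j,
    Yg h n j * (a : HAlg h n) = (b : HAlg h n) * Yg h n j + d := by
  rintro ⟨a, ha⟩
  exact ⟨⟨phi h n (-h) a, phi_mem_prev _ ha⟩, 0, by
    simp only [ZeroMemClass.coe_zero, add_zero]; exact ore_mid ha⟩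

lemma oreX (j : Fin (n+1)) : ∀ a : Hmid h n j, ∃ b d : Hmid h n j,
    Xg h n j * (a : HAlg h n) = (b : HAlg h n) * Xg h n j + d := by
  rintro ⟨a, ha⟩
  exact ⟨⟨phi h n h a, phi_mem_mid _ ha⟩, ⟨dlt h n j a, dlt_mem_mid ha⟩, ore_full j a⟩

lemma coe_mem_rep {R : Subalgebra ℂ (HAlg h n)} {t z : HAlg h n} (hz : z ∈ R) :
    z ∈ rep R t := by
  simpa using rep_single (t := t) ⟨z, hz⟩ 0

lemma mid_sub_rep (j : Fin (n+1)) {z : HAlg h n} (hz : z ∈ Hmid h n j) :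
    z ∈ rep (Hprev h n j) (Yg h n j) := by
  induction hz using Algebra.adjoin_induction with
  | mem x hx =>
    rcases hx with ⟨i, hij, rfl | rfl⟩ | rfl
    · exact coe_mem_rep (mem_prev_X hij)
    · exact coe_mem_rep (mem_prev_Y hij)
    · simpa using rep_single (R := Hprev h n j) 1 1
  | algebraMap r => exact coe_mem_rep (algebraMap_mem _ r)
  | add x y _ _ hx hy => exact add_mem hx hy
  | mul x y _ _ hx hy => exact rep_mul (oreY j) hx hy

lemma full_sub_rep (j : Fin (n+1)) {z : HAlg h n} (hz : z ∈ Hfull h n j) :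
    z ∈ rep (Hmid h n j) (Xg h n j) := by
  induction hz using Algebra.adjoin_induction with
  | mem x hx =>
    rcases hx with ⟨i, hij, rfl | rfl⟩ | rfl | rfl
    · exact coe_mem_rep (prev_le_mid j (mem_prev_X hij))
    · exact coe_mem_rep (prev_le_mid j (mem_prev_Y hij))
    · exact coe_mem_rep (mem_mid_Yj j)
    · simpa using rep_single (R := Hmid h n j) 1 1
  | algebraMap r => exact coe_mem_rep (algebraMap_mem _ r)
  | add x y _ _ hx hy => exact add_mem hx hy
  | mul x y _ _ hx hy => exact rep_mul (oreX j) hx hy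

end HW

namespace HW
variable {h : ℂ} {n : ℕ}

abbrev Mexp (n : ℕ) := HGen n →₀ ℕ
abbrev Mod (n : ℕ) := Mexp n →₀ ℂ

/-- Shift operator: multiplication by the variable indexed by `p`. -/
noncomputable def shf (n : ℕ) (p : HGen n) : Module.End ℂ (Mod n) :=
  Finsupp.lmapDomain ℂ ℂ (· + Finsupp.single p 1)

/-- `y`-weight of an exponent. -/
def wY (e : Mexp n) : ℕ := e.sum fun p k => if p.2 then k else 0
/-- `x`-weight of an exponent. -/
def wX (e : Mexp n) : ℕ := e.sum fun p k => if p.2 then 0 else k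

noncomputable def wt (e : Mexp n) : ℂ := (wY e : ℂ) - (wX e : ℂ)

/-- Euler-type diagonal operator. -/
noncomputable def Dop (n : ℕ) : Module.End ℂ (Mod n) :=
  Finsupp.lsum ℂ fun m => wt m • Finsupp.lsingle m

lemma shf_single (p : HGen n) (m : Mexp n) (c : ℂ) :
    shf n p (Finsupp.single m c) = Finsupp.single (m + Finsupp.single p 1) c := by
  simp [shf, Finsupp.lmapDomain, Finsupp.mapDomain_single]

lemma Dop_single (m : Mexp n) (c : ℂ) :
    Dop n (Finsupp.single m c) = wt m • Finsupp.single m c := by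
  simp [Dop]

lemma wY_add (a b : Mexp n) : wY (a + b) = wY a + wY b :=
  Finsupp.sum_add_index' (fun p => by simp) (fun p k l => by split <;> simp)

lemma wX_add (a b : Mexp n) : wX (a + b) = wX a + wX b :=
  Finsupp.sum_add_index' (fun p => by simp) (fun p k l => by split <;> simp)

lemma wY_single (p : HGen n) (k : ℕ) : wY (Finsupp.single p k) = if p.2 then k else 0 := by
  rw [wY, Finsupp.sum_single_index]; simp

lemma wX_single (p : HGen n) (k : ℕ) : wX (Finsupp.single p k) = if p.2 then 0 else k := by
  rw [wX, Finsupp.sum_single_index]; simp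

lemma wt_add (a b : Mexp n) : wt (a + b) = wt a + wt b := by
  simp [wt, wY_add, wX_add]; ring

lemma shf_comm (p q : HGen n) : shf n p * shf n q = shf n q * shf n p := by
  refine Finsupp.lhom_ext fun m c => ?_
  simp only [Module.End.mul_apply, shf_single]
  rw [add_assoc, add_assoc, add_comm (Finsupp.single q 1)]

lemma D_shf (p : HGen n) :
    Dop n * shf n p = shf n p * Dop n + wt (Finsupp.single p 1) • shf n p := by
  refine Finsupp.lhom_ext fun m c => ?_
  simp only [Module.End.mul_apply, LinearMap.add_apply, LinearMap.smul_apply, shf_single,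
    Dop_single, map_smul, wt_add]
  rw [add_smul, add_comm]

/-- The operators representing the generators. -/
noncomputable def genOp (h : ℂ) (n : ℕ) (p : HGen n) : Module.End ℂ (Mod n) :=
  if p.2 then shf n p else shf n p + h • (shf n (p.1, true) * Dop n)

lemma wt_sy (i : Fin (n+1)) : wt (Finsupp.single ((i, true) : HGen n) 1) = 1 := by
  simp [wt, wY_single, wX_single]

lemma wt_sx (i : Fin (n+1)) : wt (Finsupp.single ((i, false) : HGen n) 1) = -1 := by
  simp [wt, wY_single, wX_single]

end HW

namespace HW
variable {h : ℂ} {n : ℕ}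

set_option maxHeartbeats 1000000 in
/-- The representation of `H` on `Mod n`. -/
noncomputable def rho (h : ℂ) (n : ℕ) : HAlg h n →ₐ[ℂ] Module.End ℂ (Mod n) :=
  RingQuot.liftAlgHom ℂ ⟨FreeAlgebra.lift ℂ (genOp h n), by
    rintro x y (i | @⟨i, j, hij⟩ | @⟨i, j, hij⟩ | @⟨i, j, hij⟩ | @⟨i, j, hij⟩) <;>
      simp only [map_mul, map_add, map_sub, map_smul, FreeAlgebra.lift_ι_apply, genOp,
        if_true, if_false, Bool.false_eq_true, ite_false, ite_true] <;>
      refine Finsupp.lhom_ext fun m c => ?_ <;>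
      simp only [Module.End.mul_apply, LinearMap.add_apply, LinearMap.sub_apply,
        LinearMap.smul_apply, shf_single, Dop_single, map_smul, map_add, map_sub,
        wt_add, wt_sy, wt_sx, smul_smul, smul_add, smul_sub, add_right_comm] <;>
      first
      | rfl
      | module⟩

lemma rho_X (i : Fin (n+1)) : rho h n (Xg h n i)
    = shf n (i, false) + h • (shf n (i, true) * Dop n) := by
  simp [rho, Xg, RingQuot.liftAlgHom_mkAlgHom_apply, FreeAlgebra.lift_ι_apply, genOp]

lemma rho_Y (i : Fin (n+1)) : rho h n (Yg h n i) = shf n (i, true) := by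
  simp [rho, Yg, RingQuot.liftAlgHom_mkAlgHom_apply, FreeAlgebra.lift_ι_apply, genOp]

end HW

namespace HW
variable {h : ℂ} {n : ℕ}

lemma shf_add_inj (p : HGen n) : Function.Injective (fun g : Mexp n => g + Finsupp.single p 1) := by
  intro a b hab
  ext q
  have := congrArg (fun z : Mexp n => z q) hab
  simp only [Finsupp.add_apply] at this
  omega

lemma shf_apply_eq (p : HGen n) (t : Mod n) (f : Mexp n) :
    shf n p t (f + Finsupp.single p 1) = t f := by
  rw [shf, Finsupp.lmapDomain_apply]
  exact Finsupp.mapDomain_apply (shf_add_inj p) t f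

lemma shf_apply_zero (p : HGen n) (t : Mod n) (f : Mexp n) (hf : f p = 0) :
    shf n p t f = 0 := by
  rw [shf, Finsupp.lmapDomain_apply]
  refine Finsupp.mapDomain_notin_range t f ?_
  rintro ⟨g, hg⟩
  rw [← hg, Finsupp.add_apply, Finsupp.single_eq_same] at hf
  omega

lemma exp_decomp {p : HGen n} {f : Mexp n} (hf : f p ≠ 0) :
    ∃ g : Mexp n, f = g + Finsupp.single p 1 := by
  refine ⟨f - Finsupp.single p 1, ?_⟩
  ext q
  simp only [Finsupp.add_apply, Finsupp.tsub_apply, Finsupp.single_apply]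
  rcases eq_or_ne p q with rfl | hpq
  · simp only [eq_self_iff_true, if_true]; omega
  · simp [hpq]

lemma Dop_apply (t : Mod n) (f : Mexp n) : Dop n t f = wt f * t f := by
  rw [Dop, Finsupp.lsum_apply, Finsupp.sum_apply]
  refine (Finsupp.sum_eq_single f ?_ ?_).trans ?_
  · intro m hm hmf
    simp [Finsupp.single_apply, hmf]
  · intro _; simp
  · simp [Finsupp.single_apply]

/-- triangularity invariant for the representation applied to the vacuum vector -/
def Good (t : Mod n) (e : Mexp n) : Prop :=
  ∀ f, wY f ≤ wY e → t f = if f = e then 1 else 0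

lemma wY_shift_true (g : Mexp n) (i : Fin (n+1)) (k : ℕ) :
    wY (g + Finsupp.single ((i, true) : HGen n) k) = wY g + k := by
  rw [wY_add, wY_single]; simp

lemma wY_shift_false (g : Mexp n) (i : Fin (n+1)) (k : ℕ) :
    wY (g + Finsupp.single ((i, false) : HGen n) k) = wY g := by
  rw [wY_add, wY_single]; simp

lemma goodY {t : Mod n} {e : Mexp n} (i : Fin (n+1)) (ht : Good t e) :
    Good (shf n (i, true) t) (e + Finsupp.single (i, true) 1) := by
  intro f hf
  by_cases hp : f ((i, true) : HGen n) = 0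
  · rw [shf_apply_zero _ _ _ hp, if_neg]
    rintro rfl
    rw [Finsupp.add_apply, Finsupp.single_eq_same] at hp
    omega
  · obtain ⟨g, rfl⟩ := exp_decomp hp
    rw [shf_apply_eq]
    rw [wY_shift_true, wY_shift_true] at hf
    rw [ht g (by omega)]
    congr 1
    simp only [eq_iff_iff]
    constructor
    · rintro rfl; rfl
    · exact fun hgg => shf_add_inj _ hgg
lemma goodX {t : Mod n} {e : Mexp n} (i : Fin (n+1)) (ht : Good t e) :
    Good ((shf n (i, false) + h • (shf n (i, true) * Dop n)) t)
      (e + Finsupp.single (i, false) 1) := by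
  intro f hf
  rw [LinearMap.add_apply, LinearMap.smul_apply, Module.End.mul_apply, Finsupp.add_apply,
    Finsupp.smul_apply]
  rw [wY_shift_false] at hf
  have h2 : shf n (i, true) (Dop n t) f = 0 := by
    by_cases hp : f ((i, true) : HGen n) = 0
    · exact shf_apply_zero _ _ _ hp
    · obtain ⟨g, rfl⟩ := exp_decomp hp
      rw [shf_apply_eq, Dop_apply, ht g (by rw [wY_shift_true] at hf; omega), if_neg, mul_zero]
      rintro rfl
      rw [wY_shift_true] at hf; omega
  rw [h2, smul_zero, add_zero]
  by_cases hp : f ((i, false) : HGen n) = 0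
  · rw [shf_apply_zero _ _ _ hp, if_neg]
    rintro rfl
    rw [Finsupp.add_apply, Finsupp.single_eq_same] at hp
    omega
  · obtain ⟨g, rfl⟩ := exp_decomp hp
    rw [shf_apply_eq, ht g (by rwa [wY_shift_false] at hf)]
    congr 1
    simp only [eq_iff_iff]
    exact ⟨fun hgg => by rw [hgg], fun hgg => shf_add_inj _ hgg⟩

lemma goodYpow {t : Mod n} {e : Mexp n} (i : Fin (n+1)) (ht : Good t e) (k : ℕ) :
    Good ((shf n (i, true) ^ k) t) (e + Finsupp.single (i, true) k) := by
  induction k with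
  | zero => simpa using ht
  | succ k ih =>
    have := goodY i ih
    rw [add_assoc, ← Finsupp.single_add] at this
    rw [pow_succ', Module.End.mul_apply]
    exact this

lemma goodXpow {t : Mod n} {e : Mexp n} (i : Fin (n+1)) (ht : Good t e) (k : ℕ) :
    Good (((shf n (i, false) + h • (shf n (i, true) * Dop n)) ^ k) t)
      (e + Finsupp.single (i, false) k) := by
  induction k with
  | zero => simpa using ht
  | succ k ih =>
    have := goodX (h := h) i ih
    rw [add_assoc, ← Finsupp.single_add] at this
    rw [pow_succ', Module.End.mul_apply]
    exact this

lemma good_one : Good (Finsupp.single (0 : Mexp n) (1:ℂ)) 0 := by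
  intro f _
  rw [Finsupp.single_apply]
  congr 1
  simp [eq_comm]

end HW

namespace HW
variable {h : ℂ} {n : ℕ}

/-- partial normal monomial: product over generator indices `< k`. -/
noncomputable def pN (h : ℂ) (n : ℕ) (e : Mexp n) : ℕ → HAlg h n
  | 0 => 1
  | k+1 =>
    if hk : k < n + 1 then
      pN h n e k * Yg h n ⟨k, hk⟩ ^ e (⟨k, hk⟩, true) * Xg h n ⟨k, hk⟩ ^ e (⟨k, hk⟩, false)
    else pN h n e k

/-- The normal monomial `y_0^{a_0} x_0^{b_0} ⋯ y_n^{a_n} x_n^{b_n}`. -/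
noncomputable def NB (h : ℂ) (n : ℕ) (e : Mexp n) : HAlg h n := pN h n e (n+1)

/-- exponent truncated below `k`. -/
noncomputable def pNexp (e : Mexp n) (k : ℕ) : Mexp n :=
  e.filter (fun p => (p.1 : ℕ) < k)

lemma pNexp_apply (e : Mexp n) (k : ℕ) (p : HGen n) :
    pNexp e k p = if (p.1 : ℕ) < k then e p else 0 := by
  simp [pNexp, Finsupp.filter_apply]

lemma pNexp_zero (e : Mexp n) : pNexp e 0 = 0 := by
  ext p; simp [pNexp_apply]

lemma pNexp_total (e : Mexp n) : pNexp e (n+1) = e := by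
  ext p
  rw [pNexp_apply]
  exact if_pos p.1.isLt

lemma pNexp_succ_lt (e : Mexp n) {k : ℕ} (hk : k < n + 1) :
    pNexp e (k+1) = pNexp e k + Finsupp.single ((⟨k, hk⟩ : Fin (n+1)), false) (e (⟨k, hk⟩, false))
      + Finsupp.single ((⟨k, hk⟩ : Fin (n+1)), true) (e (⟨k, hk⟩, true)) := by
  ext p
  simp only [Finsupp.add_apply, Finsupp.single_apply, pNexp_apply]
  rcases eq_or_ne ((⟨k, hk⟩ : Fin (n+1)), true) p with rfl | hpt
  · simp
  · rcases eq_or_ne ((⟨k, hk⟩ : Fin (n+1)), false) p with rfl | hpf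
    · simp
    · rw [if_neg hpt, if_neg hpf]
      have hpk : (p.1 : ℕ) ≠ k := by
        intro hv
        have h1 : p.1 = (⟨k, hk⟩ : Fin (n+1)) := Fin.ext hv
        rcases p with ⟨p1, b⟩
        cases b
        · exact hpf (by rw [← h1])
        · exact hpt (by rw [← h1])
      have : ((p.1 : ℕ) < k + 1) ↔ ((p.1 : ℕ) < k) := by omega
      rw [add_zero, add_zero, if_congr this rfl rfl]

lemma pNexp_succ_ge (e : Mexp n) {k : ℕ} (hk : ¬ k < n + 1) :
    pNexp e (k+1) = pNexp e k := by
  ext p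
  have := p.1.isLt
  rw [pNexp_apply, pNexp_apply]
  have h1 : ((p.1 : ℕ) < k + 1) ↔ ((p.1 : ℕ) < k) := by omega
  rw [if_congr h1 rfl rfl]

lemma good_pN (e : Mexp n) : ∀ (k : ℕ) {t : Mod n} {e' : Mexp n}, Good t e' →
    Good (rho h n (pN h n e k) t) (e' + pNexp e k) := by
  intro k
  induction k with
  | zero =>
    intro t e' ht
    rw [pNexp_zero, add_zero, pN, map_one]
    exact ht
  | succ k ih =>
    intro t e' ht
    rw [pN]
    split
    · rename_i hk
      rw [map_mul, map_mul, map_pow, map_pow, rho_X, rho_Y, Module.End.mul_apply,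
        Module.End.mul_apply]
      have h1 := goodXpow (h := h) ⟨k, hk⟩ ht (e (⟨k, hk⟩, false))
      have h2 := goodYpow (n := n) ⟨k, hk⟩ h1 (e (⟨k, hk⟩, true))
      have h3 := ih h2
      have hexp : e' + Finsupp.single ((⟨k, hk⟩ : Fin (n+1)), false) (e (⟨k, hk⟩, false))
          + Finsupp.single ((⟨k, hk⟩ : Fin (n+1)), true) (e (⟨k, hk⟩, true)) + pNexp e k
          = e' + pNexp e (k+1) := by
        rw [pNexp_succ_lt e hk]; abel
      rwa [hexp] at h3
    · rename_i hk
      rw [pNexp_succ_ge e hk]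
      exact ih ht

lemma good_NB (e : Mexp n) :
    Good (rho h n (NB h n e) (Finsupp.single (0 : Mexp n) (1:ℂ))) e := by
  have := good_pN (h := h) e (n+1) good_one
  rwa [pNexp_total, zero_add] at this

lemma NB_li : LinearIndependent ℂ (NB h n) := by
  rw [linearIndependent_iff]
  intro l hl
  by_contra hne
  obtain ⟨e₀, he₀, hmin⟩ := l.support.exists_min_image wY (Finsupp.support_nonempty_iff.2 hne)
  have hop : rho h n (Finsupp.linearCombination ℂ (NB h n) l)
      = ∑ e ∈ l.support, l e • rho h n (NB h n e) := by
    rw [Finsupp.linearCombination_apply, Finsupp.sum, map_sum]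
    exact Finset.sum_congr rfl fun e _ => map_smul _ _ _
  have happ := congrArg (fun T : Module.End ℂ (Mod n) =>
    (T (Finsupp.single (0 : Mexp n) (1:ℂ))) e₀) hop
  rw [hl, map_zero] at happ
  simp only [LinearMap.sum_apply, LinearMap.smul_apply, Finsupp.coe_finset_sum,
    Finset.sum_apply, Finsupp.smul_apply, LinearMap.zero_apply, Finsupp.coe_zero,
    Pi.zero_apply, smul_eq_mul] at happ
  have hsum : ∑ e ∈ l.support, l e * (rho h n (NB h n e) (Finsupp.single 0 1)) e₀ = l e₀ := by
    rw [Finset.sum_eq_single e₀ (fun e he hee => ?_) (fun he => ?_)]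
    · have hg := good_NB (h := h) e₀ e₀ le_rfl
      rw [if_pos rfl] at hg
      rw [hg, mul_one]
    · have hg := good_NB (h := h) e e₀ (hmin e he)
      rw [if_neg (Ne.symm hee)] at hg
      rw [hg, mul_zero]
    · exact absurd he₀ he
  rw [hsum] at happ
  exact (Finsupp.mem_support_iff.1 he₀) happ.symm

end HW

namespace HW
variable {h : ℂ} {n : ℕ}

/-- exponents supported on indices `< T` -/
def Sm (n : ℕ) (T : ℕ) : Set (Mexp n) := {e | ∀ p : HGen n, e p ≠ 0 → (p.1 : ℕ) < T}

/-- exponents supported on indices `≤ j`, with no `x_j` -/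
def MidSm (n : ℕ) (j : Fin (n+1)) : Set (Mexp n) :=
  {e | (∀ p : HGen n, e p ≠ 0 → (p.1 : ℕ) < (j : ℕ) + 1) ∧ e (j, false) = 0}

lemma pN_congr {e f : Mexp n} (k : ℕ) (hef : ∀ p : HGen n, (p.1 : ℕ) < k → e p = f p) :
    pN h n e k = pN h n f k := by
  induction k with
  | zero => rfl
  | succ k ih =>
    rw [pN, pN]
    split
    · rename_i hk
      rw [ih (fun p hp => hef p (by omega)), hef (⟨k, hk⟩, true) (by simp),
        hef (⟨k, hk⟩, false) (by simp)]
    · exact ih (fun p hp => hef p (by omega))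

lemma pN_stable {e : Mexp n} {k : ℕ} (hk : ∀ p : HGen n, e p ≠ 0 → (p.1 : ℕ) < k) :
    ∀ m, k ≤ m → pN h n e m = pN h n e k := by
  intro m
  induction m with
  | zero => intro hm; rw [Nat.le_zero.1 hm]
  | succ m ih =>
    intro hm
    rcases Nat.lt_or_ge k (m+1) with hlt | hge
    · have hkm : k ≤ m := by omega
      rw [pN]
      split
      · rename_i hmn
        have h0 : ∀ b, e ((⟨m, hmn⟩ : Fin (n+1)), b) = 0 := by
          intro b
          by_contra hb
          have := hk (⟨m, hmn⟩, b) hb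
          simp only at this
          omega
        rw [h0, h0, pow_zero, pow_zero, mul_one, mul_one]
        exact ih hkm
      · exact ih hkm
    · have : k = m + 1 := by omega
      rw [this]

lemma NB_zero : NB h n 0 = 1 := by
  rw [NB]
  have : ∀ k, pN h n 0 k = 1 := by
    intro k
    induction k with
    | zero => rfl
    | succ k ih => rw [pN]; split <;> simp [ih]
  exact this _

lemma NB_mul_YX {j : Fin (n+1)} {e : Mexp n} (he : e ∈ Sm n (j : ℕ)) (a b : ℕ) :
    NB h n (e + Finsupp.single (j, true) a + Finsupp.single (j, false) b)
      = NB h n e * Yg h n j ^ a * Xg h n j ^ b := by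
  have hj : (j : ℕ) < n + 1 := j.isLt
  set e' := e + Finsupp.single ((j : Fin (n+1)), true) a + Finsupp.single ((j:Fin (n+1)), false) b with he'
  have het : e (j, true) = 0 := by
    by_contra hb; exact absurd (he _ hb) (by simp)
  have hef : e (j, false) = 0 := by
    by_contra hb; exact absurd (he _ hb) (by simp)
  have he't : e' (j, true) = a := by
    simp [he', Finsupp.add_apply, Finsupp.single_apply, het]
  have he'f : e' (j, false) = b := by
    simp [he', Finsupp.add_apply, Finsupp.single_apply, hef]
  have hsupp : ∀ p : HGen n, e' p ≠ 0 → (p.1 : ℕ) < (j : ℕ) + 1 := by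
    intro p hp
    simp only [he', Finsupp.add_apply, Finsupp.single_apply] at hp
    by_contra hge
    have h1 : e p = 0 := by
      by_contra hb; have := he p hb; omega
    have h2 : ((j : Fin (n+1)), true) ≠ p := by
      rintro rfl; simp at hge
    have h3 : ((j : Fin (n+1)), false) ≠ p := by
      rintro rfl; simp at hge
    rw [h1, if_neg h2, if_neg h3] at hp
    simp at hp
  have step1 : NB h n e' = pN h n e' ((j : ℕ) + 1) :=
    pN_stable hsupp (n+1) (by omega)
  have step2 : pN h n e' ((j:ℕ) + 1)
      = pN h n e' (j:ℕ) * Yg h n j ^ a * Xg h n j ^ b := by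
    rw [pN, dif_pos hj]
    simp only [Fin.eta, he't, he'f]
  have step3 : pN h n e' (j:ℕ) = pN h n e (j:ℕ) := by
    refine pN_congr _ fun p hp => ?_
    have h2 : ((j : Fin (n+1)), true) ≠ p := by
      rintro rfl; simp at hp
    have h3 : ((j : Fin (n+1)), false) ≠ p := by
      rintro rfl; simp at hp
    simp [he', Finsupp.add_apply, Finsupp.single_apply, if_neg h2, if_neg h3]
  have step4 : pN h n e (j:ℕ) = NB h n e :=
    (pN_stable he (n+1) (by omega)).symm
  rw [step1, step2, step3, step4]

lemma NB_mul_Y {j : Fin (n+1)} {e : Mexp n} (he : e ∈ Sm n (j : ℕ)) (a : ℕ) :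
    NB h n (e + Finsupp.single (j, true) a) = NB h n e * Yg h n j ^ a := by
  have := NB_mul_YX (h := h) he a 0
  simpa using this

lemma NB_mul_X {j : Fin (n+1)} {e : Mexp n} (he : e ∈ MidSm n j) (b : ℕ) :
    NB h n (e + Finsupp.single (j, false) b) = NB h n e * Xg h n j ^ b := by
  have hj : (j : ℕ) < n + 1 := j.isLt
  set e' := e + Finsupp.single ((j : Fin (n+1)), false) b with he'
  have he't : e' (j, true) = e (j, true) := by
    simp [he', Finsupp.add_apply, Finsupp.single_apply]
  have he'f : e' (j, false) = b := by
    simp [he', Finsupp.add_apply, Finsupp.single_apply, he.2]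
  have hsupp : ∀ p : HGen n, e' p ≠ 0 → (p.1 : ℕ) < (j : ℕ) + 1 := by
    intro p hp
    simp only [he', Finsupp.add_apply, Finsupp.single_apply] at hp
    by_contra hge
    have h1 : e p = 0 := by
      by_contra hb; have := he.1 p hb; omega
    have h3 : ((j : Fin (n+1)), false) ≠ p := by
      rintro rfl; simp at hge
    rw [h1, if_neg h3] at hp
    simp at hp
  have step1 : NB h n e' = pN h n e' ((j : ℕ) + 1) :=
    pN_stable hsupp (n+1) (by omega)
  have step2 : pN h n e' ((j:ℕ) + 1)
      = pN h n e' (j:ℕ) * Yg h n j ^ e (j, true) * Xg h n j ^ b := by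
    rw [pN, dif_pos hj]
    simp only [Fin.eta, he't, he'f]
  have step3 : pN h n e' (j:ℕ) = pN h n e (j:ℕ) := by
    refine pN_congr _ fun p hp => ?_
    have h3 : ((j : Fin (n+1)), false) ≠ p := by
      rintro rfl; simp at hp
    simp [he', Finsupp.add_apply, Finsupp.single_apply, if_neg h3]
  have step4 : NB h n e = pN h n e (j:ℕ) * Yg h n j ^ e (j, true) := by
    have s1 : NB h n e = pN h n e ((j:ℕ)+1) := pN_stable he.1 (n+1) (by omega)
    rw [s1, pN, dif_pos hj]
    simp only [Fin.eta, he.2, pow_zero, mul_one]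
  rw [step1, step2, step3, ← step4]

/-- generating set with indices `< T` -/
def gset (h : ℂ) (n : ℕ) (T : ℕ) : Set (HAlg h n) :=
  {a | ∃ i : Fin (n+1), (i : ℕ) < T ∧ (a = Xg h n i ∨ a = Yg h n i)}

lemma gset_prev (j : Fin (n+1)) :
    {a | ∃ i < j, a = Xg h n i ∨ a = Yg h n i} = gset h n (j : ℕ) := by
  ext z
  constructor
  · rintro ⟨i, hij, hz⟩; exact ⟨i, hij, hz⟩
  · rintro ⟨i, hij, hz⟩; exact ⟨i, hij, hz⟩

lemma gset_full (j : Fin (n+1)) :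
    gset h n ((j : ℕ) + 1)
      = ({a | ∃ i < j, a = Xg h n i ∨ a = Yg h n i} ∪ {Yg h n j, Xg h n j}) := by
  ext z
  constructor
  · rintro ⟨i, hij, rfl | rfl⟩
    · rcases Nat.lt_or_ge (i : ℕ) (j : ℕ) with hlt | hge
      · exact Or.inl ⟨i, hlt, Or.inl rfl⟩
      · have : i = j := Fin.ext (by omega)
        subst this
        exact Or.inr (Or.inr rfl)
    · rcases Nat.lt_or_ge (i : ℕ) (j : ℕ) with hlt | hge
      · exact Or.inl ⟨i, hlt, Or.inr rfl⟩
      · have : i = j := Fin.ext (by omega)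
        subst this
        exact Or.inr (Or.inl rfl)
  · rintro ((⟨i, hij, hz⟩) | (rfl | rfl))
    · exact ⟨i, by omega, hz⟩
    · exact ⟨j, by omega, Or.inr rfl⟩
    · exact ⟨j, by omega, Or.inl rfl⟩

lemma Sm_mono {T T' : ℕ} (hT : T ≤ T') : Sm n T ⊆ Sm n T' :=
  fun e he p hp => lt_of_lt_of_le (he p hp) hT

lemma span_main : ∀ (T : ℕ) {z : HAlg h n}, z ∈ Algebra.adjoin ℂ (gset h n T) →
    z ∈ Submodule.span ℂ (NB h n '' Sm n T) := by
  intro T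
  induction T with
  | zero =>
    intro z hz
    have hg : gset h n 0 = ∅ := by
      ext a; simp only [gset, Set.mem_setOf_eq, Set.mem_empty_iff_false, iff_false]
      rintro ⟨i, hi, _⟩; omega
    rw [hg, Algebra.adjoin_empty, Algebra.mem_bot] at hz
    obtain ⟨r, rfl⟩ := hz
    rw [Algebra.algebraMap_eq_smul_one, ← NB_zero (h := h) (n := n)]
    exact Submodule.smul_mem _ r (Submodule.subset_span ⟨0, fun p hp => absurd rfl hp, rfl⟩)
  | succ T IH =>
    intro z hz
    by_cases hT : T < n + 1
    · set j : Fin (n+1) := ⟨T, hT⟩ with hjd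
      have hjv : (j : ℕ) = T := rfl
      have hful : z ∈ Hfull h n j := by
        rw [Hfull, ← gset_full j, hjv]
        exact hz
      obtain ⟨c, rfl⟩ := full_sub_rep j hful
      refine Submodule.sum_mem _ fun m _ => ?_
      obtain ⟨d, hd⟩ := mid_sub_rep j (c m).2
      dsimp only
      rw [hd, Finsupp.sum_mul]
      refine Submodule.sum_mem _ fun k _ => ?_
      dsimp only
      have hb : ((d k : Hprev h n j) : HAlg h n) ∈ Submodule.span ℂ (NB h n '' Sm n T) := by
        apply IH
        have : Hprev h n j = Algebra.adjoin ℂ (gset h n T) := by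
          rw [Hprev, gset_prev, hjv]
        rw [← this]
        exact (d k).2
      have key : ∀ w ∈ Submodule.span ℂ (NB h n '' Sm n T),
          w * Yg h n j ^ k * Xg h n j ^ m ∈ Submodule.span ℂ (NB h n '' Sm n (T+1)) := by
        intro w hw
        induction hw using Submodule.span_induction with
        | mem w hw =>
          obtain ⟨e, he, rfl⟩ := hw
          rw [← hjv] at he
          rw [← NB_mul_YX (h := h) he k m]
          refine Submodule.subset_span ⟨_, fun p hp => ?_, rfl⟩
          have h2 := NB_mul_YX (h := h) he k m
          -- smallness
          simp only [Finsupp.add_apply, Finsupp.single_apply] at hp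
          by_cases hpj : (p.1 : ℕ) < (j:ℕ)
          · omega
          · have h1 : e p = 0 := by
              by_contra hb; have := he p hb; omega
            rcases eq_or_ne ((j : Fin (n+1)), true) p with rfl | h2'
            · simp [hjv]
            · rcases eq_or_ne ((j : Fin (n+1)), false) p with rfl | h3'
              · simp [hjv]
              · rw [h1, if_neg h2', if_neg h3'] at hp
                simp at hp
        | zero => simp
        | add u v _ _ hu hv => rw [add_mul, add_mul]; exact add_mem hu hv
        | smul r u _ hu => rw [smul_mul_assoc, smul_mul_assoc]; exact Submodule.smul_mem _ r hu
      exact key _ hb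
    · have hg : gset h n (T+1) = gset h n T := by
        ext a
        constructor
        · rintro ⟨i, hi, ha⟩
          exact ⟨i, by have := i.isLt; omega, ha⟩
        · rintro ⟨i, hi, ha⟩
          exact ⟨i, by omega, ha⟩
      rw [hg] at hz
      exact Submodule.span_mono (Set.image_mono (Sm_mono (by omega))) (IH hz)

lemma prev_span {j : Fin (n+1)} {z : HAlg h n} (hz : z ∈ Hprev h n j) :
    z ∈ Submodule.span ℂ (NB h n '' Sm n (j : ℕ)) := by
  apply span_main
  rwa [← gset_prev, ← Hprev]

lemma mid_span {j : Fin (n+1)} {z : HAlg h n} (hz : z ∈ Hmid h n j) :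
    z ∈ Submodule.span ℂ (NB h n '' MidSm n j) := by
  obtain ⟨c, rfl⟩ := mid_sub_rep j hz
  refine Submodule.sum_mem _ fun k _ => ?_
  dsimp only
  have key : ∀ w ∈ Submodule.span ℂ (NB h n '' Sm n (j : ℕ)),
      w * Yg h n j ^ k ∈ Submodule.span ℂ (NB h n '' MidSm n j) := by
    intro w hw
    induction hw using Submodule.span_induction with
    | mem w hw =>
      obtain ⟨e, he, rfl⟩ := hw
      rw [← NB_mul_Y (h := h) he k]
      refine Submodule.subset_span ⟨_, ⟨fun p hp => ?_, ?_⟩, rfl⟩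
      · simp only [Finsupp.add_apply, Finsupp.single_apply] at hp
        by_cases hpj : (p.1 : ℕ) < (j : ℕ)
        · omega
        · have h1 : e p = 0 := by
            by_contra hb; have := he p hb; omega
          rcases eq_or_ne ((j : Fin (n+1)), true) p with rfl | h2'
          · simp
          · rw [h1, if_neg h2'] at hp
            simp at hp
      · have h1 : e ((j : Fin (n+1)), false) = 0 := by
          by_contra hb; have := he _ hb; simp at this
        have h2 : ((j : Fin (n+1)), true) ≠ ((j : Fin (n+1)), false) := by simp
        simp [Finsupp.add_apply, Finsupp.single_apply, h1, if_neg h2]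
    | zero => simp
    | add u v _ _ hu hv => rw [add_mul]; exact add_mem hu hv
    | smul r u _ hu => rw [smul_mul_assoc]; exact Submodule.smul_mem _ r hu
  exact key _ (prev_span (c k).2)

end HW

namespace HW
variable {h : ℂ} {n : ℕ}

lemma exp_add_inj (s : Mexp n) : Function.Injective (fun g : Mexp n => g + s) := by
  intro a b hab
  ext q
  have := congrArg (fun z : Mexp n => z q) hab
  simp only [Finsupp.add_apply] at this
  omega

lemma eval_shift {S : Set (Mexp n)} {p0 : HGen n} (hS : ∀ e ∈ S, e p0 = 0)
    (U : Finset ℕ) (l : ℕ → (Mexp n →₀ ℂ)) (hl1 : ∀ m, l m ∈ Finsupp.supported ℂ ℂ S)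
    {e : Mexp n} (heS : e ∈ S) {m' : ℕ} (hm' : m' ∈ U) :
    (∑ m ∈ U, Finsupp.mapDomain (· + Finsupp.single p0 m) (l m))
      (e + Finsupp.single p0 m') = l m' e := by
  rw [Finset.sum_apply']
  have hterm : ∀ m ∈ U,
      (Finsupp.mapDomain (· + Finsupp.single p0 m) (l m)) (e + Finsupp.single p0 m')
      = if m = m' then l m' e else 0 := by
    intro m _
    rcases lt_trichotomy m m' with hlt | rfl | hgt
    · rw [if_neg (by omega)]
      have hdec : e + Finsupp.single p0 m'
          = (e + Finsupp.single p0 (m' - m)) + Finsupp.single p0 m := by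
        rw [add_assoc, ← Finsupp.single_add]
        congr 2
        omega
      rw [hdec, Finsupp.mapDomain_apply (exp_add_inj _)]
      have hnot : e + Finsupp.single p0 (m' - m) ∉ S := by
        intro hmem
        have := hS _ hmem
        rw [Finsupp.add_apply, Finsupp.single_eq_same, hS e heS] at this
        omega
      exact Finsupp.notMem_support_iff.1 fun hsup => hnot (hl1 m hsup)
    · rw [if_pos rfl, Finsupp.mapDomain_apply (exp_add_inj _)]
    · rw [if_neg (by omega)]
      refine Finsupp.mapDomain_notin_range _ _ ?_
      rintro ⟨g, hg⟩
      have := congrArg (fun z : Mexp n => z p0) hg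
      simp only [Finsupp.add_apply, Finsupp.single_eq_same, hS e heS] at this
      omega
  rw [Finset.sum_congr rfl hterm, Finset.sum_ite_eq' U m' (fun _ => l m' e), if_pos hm']

lemma uniq_key {S : Set (Mexp n)} {p0 : HGen n} {t : HAlg h n}
    (hmul : ∀ e ∈ S, ∀ m : ℕ, NB h n (e + Finsupp.single p0 m) = NB h n e * t ^ m)
    (hS : ∀ e ∈ S, e p0 = 0)
    {R : Subalgebra ℂ (HAlg h n)}
    (hspan : ∀ a : R, (a : HAlg h n) ∈ Submodule.span ℂ (NB h n '' S))
    (c c' : ℕ →₀ R)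
    (hcc : (c.sum fun m a => (a : HAlg h n) * t ^ m)
      = c'.sum fun m a => (a : HAlg h n) * t ^ m) : c = c' := by
  classical
  have hex : ∀ (b : ℕ →₀ R) (m : ℕ), ∃ l, l ∈ Finsupp.supported ℂ ℂ S
      ∧ Finsupp.linearCombination ℂ (NB h n) l = ((b m : R) : HAlg h n) := by
    intro b m
    obtain ⟨l, hl1, hl2⟩ := (Finsupp.mem_span_image_iff_linearCombination ℂ).1 (hspan (b m))
    exact ⟨l, hl1, hl2⟩
  choose l hl1 hl2 using hex
  set U : Finset ℕ := c.support ∪ c'.support with hU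
  have hsum : ∀ b : ℕ →₀ R, b.support ⊆ U →
      Finsupp.linearCombination ℂ (NB h n)
        (∑ m ∈ U, Finsupp.mapDomain (· + Finsupp.single p0 m) (l b m))
      = b.sum fun m a => (a : HAlg h n) * t ^ m := by
    intro b hb
    rw [map_sum, Finsupp.sum_of_support_subset b hb _ (fun m _ => by simp)]
    refine Finset.sum_congr rfl fun m hm => ?_
    rw [Finsupp.linearCombination_mapDomain, ← hl2 b m, Finsupp.linearCombination_apply,
      Finsupp.linearCombination_apply, Finsupp.sum_mul]
    refine Finsupp.sum_congr fun e heS => ?_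
    have heS' : e ∈ S := hl1 b m heS
    rw [Function.comp_apply, hmul e heS' m, smul_mul_assoc]
  have hΓ : (∑ m ∈ U, Finsupp.mapDomain (· + Finsupp.single p0 m) (l c m))
      = ∑ m ∈ U, Finsupp.mapDomain (· + Finsupp.single p0 m) (l c' m) := by
    have hz : Finsupp.linearCombination ℂ (NB h n)
        ((∑ m ∈ U, Finsupp.mapDomain (· + Finsupp.single p0 m) (l c m))
          - ∑ m ∈ U, Finsupp.mapDomain (· + Finsupp.single p0 m) (l c' m)) = 0 := by
      rw [map_sub, hsum c Finset.subset_union_left,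
        hsum c' Finset.subset_union_right, hcc, sub_self]
    have := linearIndependent_iff.1 NB_li _ hz
    exact sub_eq_zero.1 this
  ext m' : 1
  by_cases hm : m' ∈ U
  · have hle : l c m' = l c' m' := by
      ext e
      by_cases heS : e ∈ S
      · have h1 := eval_shift hS U (l c) (hl1 c) heS hm
        have h2 := eval_shift hS U (l c') (hl1 c') heS hm
        rw [← h1, ← h2, hΓ]
      · rw [Finsupp.notMem_support_iff.1 fun hsup => heS (hl1 c m' hsup),
          Finsupp.notMem_support_iff.1 fun hsup => heS (hl1 c' m' hsup)]
    refine Subtype.ext ?_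
    rw [← hl2 c m', ← hl2 c' m', hle]
  · rw [hU, Finset.mem_union, not_or, Finsupp.notMem_support_iff,
      Finsupp.notMem_support_iff] at hm
    rw [hm.1, hm.2]

lemma uniq_mid (j : Fin (n+1)) (c c' : ℕ →₀ (Hprev h n j))
    (hcc : (c.sum fun m a => (a : HAlg h n) * Yg h n j ^ m)
      = c'.sum fun m a => (a : HAlg h n) * Yg h n j ^ m) : c = c' := by
  refine uniq_key (S := Sm n (j : ℕ)) (p0 := ((j : Fin (n+1)), true)) ?_ ?_ ?_ c c' hcc
  · exact fun e he m => NB_mul_Y he m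
  · intro e he
    by_contra hb
    have := he _ hb
    simp at this
  · exact fun a => prev_span a.2

lemma uniq_full (j : Fin (n+1)) (c c' : ℕ →₀ (Hmid h n j))
    (hcc : (c.sum fun m a => (a : HAlg h n) * Xg h n j ^ m)
      = c'.sum fun m a => (a : HAlg h n) * Xg h n j ^ m) : c = c' := by
  refine uniq_key (S := MidSm n j) (p0 := ((j : Fin (n+1)), false)) ?_ ?_ ?_ c c' hcc
  · exact fun e he m => NB_mul_X he m
  · exact fun e he => he.2
  · exact fun a => mid_span a.2

end HW

namespace HW
variable {h : ℂ} {n : ℕ}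

noncomputable def sigY (h : ℂ) (n : ℕ) (j : Fin (n+1)) : Hprev h n j →ₐ[ℂ] Hprev h n j :=
  ((phi h n (-h)).comp (Hprev h n j).val).codRestrict (Hprev h n j)
    (fun a => phi_mem_prev _ a.2)

@[simp] lemma sigY_coe (j : Fin (n+1)) (a : Hprev h n j) :
    ((sigY h n j a : Hprev h n j) : HAlg h n) = phi h n (-h) (a : HAlg h n) := rfl

noncomputable def sigX (h : ℂ) (n : ℕ) (j : Fin (n+1)) : Hmid h n j →ₐ[ℂ] Hmid h n j :=
  ((phi h n h).comp (Hmid h n j).val).codRestrict (Hmid h n j)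
    (fun a => phi_mem_mid _ a.2)

@[simp] lemma sigX_coe (j : Fin (n+1)) (a : Hmid h n j) :
    ((sigX h n j a : Hmid h n j) : HAlg h n) = phi h n h (a : HAlg h n) := rfl

noncomputable def delX (h : ℂ) (n : ℕ) (j : Fin (n+1)) : Hmid h n j →ₗ[ℂ] Hmid h n j where
  toFun a := ⟨dlt h n j (a : HAlg h n), dlt_mem_mid a.2⟩
  map_add' a b := Subtype.ext (by push_cast; exact dlt_add j _ _)
  map_smul' r a := Subtype.ext (by push_cast; exact dlt_smul j r _)

@[simp] lemma delX_coe (j : Fin (n+1)) (a : Hmid h n j) :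
    ((delX h n j a : Hmid h n j) : HAlg h n) = dlt h n j (a : HAlg h n) := rfl

lemma exun_mid (j : Fin (n+1)) (s : Hmid h n j) :
    ∃! c : ℕ →₀ (Hprev h n j),
      (s : HAlg h n) = c.sum fun m a => (a : HAlg h n) * Yg h n j ^ m := by
  obtain ⟨c, hcs⟩ := mid_sub_rep j s.2
  exact ⟨c, hcs, fun c' hc' => uniq_mid j c' c (by rw [← hcs, ← hc'])⟩

lemma exun_full (j : Fin (n+1)) (s : Hfull h n j) :
    ∃! c : ℕ →₀ (Hmid h n j),
      (s : HAlg h n) = c.sum fun m a => (a : HAlg h n) * Xg h n j ^ m := by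
  obtain ⟨c, hcs⟩ := full_sub_rep j s.2
  exact ⟨c, hcs, fun c' hc' => uniq_full j c' c (by rw [← hcs, ← hc'])⟩

end HW

theorem HAlg_isIteratedOreExtension' (h : ℂ) (n : ℕ) (j : Fin (n + 1)) :
    (∃ σ : Hprev h n j →ₐ[ℂ] Hprev h n j,
      IsOreExtensionStep (Hprev h n j) (Hmid h n j) (Yg h n j) σ 0 ∧
      (∀ i : Fin (n + 1), ∀ _ : i < j, ∀ hx : Xg h n i ∈ Hprev h n j,
        (σ ⟨Xg h n i, hx⟩ : HAlg h n) = Xg h n i - h • Yg h n i) ∧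
      (∀ i : Fin (n + 1), ∀ _ : i < j, ∀ hy : Yg h n i ∈ Hprev h n j,
        (σ ⟨Yg h n i, hy⟩ : HAlg h n) = Yg h n i)) ∧
    (∃ (σ' : Hmid h n j →ₐ[ℂ] Hmid h n j) (δ' : Hmid h n j →ₗ[ℂ] Hmid h n j),
      IsOreExtensionStep (Hmid h n j) (Hfull h n j) (Xg h n j) σ' δ' ∧
      (∀ i : Fin (n + 1), ∀ _ : i < j, ∀ hx : Xg h n i ∈ Hmid h n j,
        (σ' ⟨Xg h n i, hx⟩ : HAlg h n) = Xg h n i + h • Yg h n i ∧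
        (δ' ⟨Xg h n i, hx⟩ : HAlg h n) = -(h • ((Xg h n i - h • Yg h n i) * Yg h n j))) ∧
      (∀ i : Fin (n + 1), ∀ _ : i < j, ∀ hy : Yg h n i ∈ Hmid h n j,
        (σ' ⟨Yg h n i, hy⟩ : HAlg h n) = Yg h n i ∧
        (δ' ⟨Yg h n i, hy⟩ : HAlg h n) = h • (Yg h n i * Yg h n j)) ∧
      (∀ hyj : Yg h n j ∈ Hmid h n j,
        (σ' ⟨Yg h n j, hyj⟩ : HAlg h n) = Yg h n j ∧
        (δ' ⟨Yg h n j, hyj⟩ : HAlg h n) = h • (Yg h n j * Yg h n j))) := by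
  constructor
  · refine ⟨HW.sigY h n j, ⟨HW.prev_le_mid j, HW.mem_mid_Yj j, ?_, ?_, ?_⟩, ?_, ?_⟩
    · intro a b; simp
    · intro a
      simp only [HW.sigY_coe, LinearMap.zero_apply, ZeroMemClass.coe_zero, add_zero]
      exact HW.ore_mid a.2
    · exact HW.exun_mid j
    · intro i _ hx
      rw [HW.sigY_coe, HW.phi_X]; module
    · intro i _ hy
      rw [HW.sigY_coe, HW.phi_Y]
  · refine ⟨HW.sigX h n j, HW.delX h n j,
      ⟨HW.mid_le_full j, HW.mem_full_Xj j, ?_, ?_, ?_⟩, ?_, ?_, ?_⟩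
    · intro a b
      refine Subtype.ext ?_
      push_cast
      simp only [HW.delX_coe, HW.sigX_coe]
      exact HW.dlt_mul j _ _
    · intro a
      simp only [HW.sigX_coe, HW.delX_coe]
      exact HW.ore_full j _
    · exact HW.exun_full j
    · intro i hij hx
      refine ⟨?_, ?_⟩
      · rw [HW.sigX_coe, HW.phi_X]
      · rw [HW.delX_coe, HW.dlt_X hij]
    · intro i hij hy
      refine ⟨?_, ?_⟩
      · rw [HW.sigX_coe, HW.phi_Y]
      · rw [HW.delX_coe, HW.dlt_Y hij]
    · intro hyj
      refine ⟨?_, ?_⟩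
      · rw [HW.sigX_coe, HW.phi_Y]
      · rw [HW.delX_coe, HW.dlt_Yj j]

/-- `H_n` is an iterated Ore extension: in the tower
`ℂ ⊂ H₀' ⊂ H₀ ⊂ H₁' ⊂ ⋯ ⊂ Hₙ' ⊂ Hₙ`, each step `H_{j-1} ⊂ H_j'` adjoins `y_j`
with zero derivation and automorphism `σ (x_i) = x_i - h y_i`, `σ (y_i) = y_i`
(`i < j`), and each step `H_j' ⊂ H_j` adjoins `x_j` with `σ' (x_i) = x_i + h y_i`,
`σ' (y_i) = y_i`, `σ' (y_j) = y_j` and `σ'`-derivation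
`δ' (x_i) = -h (x_i - h y_i) y_j`, `δ' (y_i) = h y_i y_j`, `δ' (y_j) = h y_j²`. -/
theorem HAlg_isIteratedOreExtension (h : ℂ) (n : ℕ) (j : Fin (n + 1)) :
    (∃ σ : Hprev h n j →ₐ[ℂ] Hprev h n j,
      IsOreExtensionStep (Hprev h n j) (Hmid h n j) (Yg h n j) σ 0 ∧
      (∀ i : Fin (n + 1), ∀ _ : i < j, ∀ hx : Xg h n i ∈ Hprev h n j,
        (σ ⟨Xg h n i, hx⟩ : HAlg h n) = Xg h n i - h • Yg h n i) ∧
      (∀ i : Fin (n + 1), ∀ _ : i < j, ∀ hy : Yg h n i ∈ Hprev h n j,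
        (σ ⟨Yg h n i, hy⟩ : HAlg h n) = Yg h n i)) ∧
    (∃ (σ' : Hmid h n j →ₐ[ℂ] Hmid h n j) (δ' : Hmid h n j →ₗ[ℂ] Hmid h n j),
      IsOreExtensionStep (Hmid h n j) (Hfull h n j) (Xg h n j) σ' δ' ∧
      (∀ i : Fin (n + 1), ∀ _ : i < j, ∀ hx : Xg h n i ∈ Hmid h n j,
        (σ' ⟨Xg h n i, hx⟩ : HAlg h n) = Xg h n i + h • Yg h n i ∧
        (δ' ⟨Xg h n i, hx⟩ : HAlg h n) = -(h • ((Xg h n i - h • Yg h n i) * Yg h n j))) ∧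
      (∀ i : Fin (n + 1), ∀ _ : i < j, ∀ hy : Yg h n i ∈ Hmid h n j,
        (σ' ⟨Yg h n i, hy⟩ : HAlg h n) = Yg h n i ∧
        (δ' ⟨Yg h n i, hy⟩ : HAlg h n) = h • (Yg h n i * Yg h n j)) ∧
      (∀ hyj : Yg h n j ∈ Hmid h n j,
        (σ' ⟨Yg h n j, hyj⟩ : HAlg h n) = Yg h n j ∧
        (δ' ⟨Yg h n j, hyj⟩ : HAlg h n) = h • (Yg h n j * Yg h n j))) := by
  exact HAlg_isIteratedOreExtension' h n j
end

section
/- The h-deformed algebra H_n (finitely many generators) has no zero divisors, i.e., it is a domain. -/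
/-!
Ordered monomials `y^s x^t` (the `x`-indices nondecreasing) span `H_n`: the relations let one move
an `x_i` to the right past the `y`'s and into its place among the `x`'s. On the other hand `H_n`
acts on `ℂ[y_i, w_i]` with `y_i` acting as multiplication by `y_i` and `x_i` as `y_i (w_i + h Θ)`,
where `Θ = Σ_j y_j ∂/∂y_j - 2 Σ_j w_j ∂/∂w_j` (`HAlg.euler`). For the lexicographic order every
ordered monomial acts triangularly: it raises the leading exponent by a shift from which `(s, t)`
can be read off, and preserves the leading coefficient. Hence in a nonzero combination of ordered
monomials the term of largest shift survives in the leading coefficient, so every nonzero element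
of `H_n` acts injectively, and `a * b = 0` forces `a = 0` or `b = 0`.
-/

theorem Submodule.eq_top_of_one_mem_of_mul_mem {R A : Type*} [CommSemiring R] [Semiring A]
    [Algebra R A] {s : Set A} (hs : Algebra.adjoin R s = ⊤) {M : Submodule R A} (h1 : 1 ∈ M)
    (hmul : ∀ a ∈ s, ∀ z ∈ M, a * z ∈ M) : M = ⊤ := by
  rw [eq_top_iff]
  rintro a -
  have ha : a ∈ Algebra.adjoin R s := hs ▸ Algebra.mem_top
  suffices ∀ z ∈ M, a * z ∈ M by simpa using this 1 h1
  induction ha using Algebra.adjoin_induction with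
  | mem a ha => exact hmul a ha
  | algebraMap r => exact fun z hz => by rw [← Algebra.smul_def]; exact M.smul_mem r hz
  | add a b _ _ ha hb => exact fun z hz => by rw [add_mul]; exact M.add_mem (ha z hz) (hb z hz)
  | mul a b _ _ ha hb => exact fun z hz => by rw [mul_assoc]; exact ha _ (hb z hz)

theorem Multiset.toFinsupp_map {α β : Type*} [DecidableEq β] (f : α → β) (s : Multiset α) :
    Multiset.toFinsupp (s.map f) = (s.map fun a => Finsupp.single (f a) 1).sum := by
  induction s using Multiset.induction_on with
  | empty => simp
  | cons a s ih =>
    rw [map_cons, map_cons, sum_cons, ← ih, ← toFinsupp_singleton, ← toFinsupp_add, singleton_add]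

open MvPolynomial

namespace MonomialOrder

variable {σ R : Type*} [CommRing R]

def IsTriangular (m : MonomialOrder σ) (T : Module.End R (MvPolynomial σ R)) (d : σ →₀ ℕ) :
    Prop :=
  ∀ p, m.degree (T p) ≼[m] d + m.degree p ∧ (T p).coeff (d + m.degree p) = m.leadingCoeff p

variable {m : MonomialOrder σ} {T S : Module.End R (MvPolynomial σ R)} {d e : σ →₀ ℕ}

theorem IsTriangular.degree_apply (hT : m.IsTriangular T d) {p : MvPolynomial σ R} (hp : p ≠ 0) :
    m.degree (T p) = d + m.degree p := by
  refine m.toSyn.injective (le_antisymm (hT p).1 (m.le_degree ?_))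
  rw [mem_support_iff, (hT p).2]
  exact m.leadingCoeff_ne_zero_iff.mpr hp

theorem IsTriangular.leadingCoeff_apply (hT : m.IsTriangular T d) {p : MvPolynomial σ R}
    (hp : p ≠ 0) : m.leadingCoeff (T p) = m.leadingCoeff p := by
  rw [leadingCoeff, hT.degree_apply hp, (hT p).2]

theorem isTriangular_one : m.IsTriangular (1 : Module.End R (MvPolynomial σ R)) 0 := by
  intro p
  simp [leadingCoeff]

theorem IsTriangular.mul (hT : m.IsTriangular T d) (hS : m.IsTriangular S e) :
    m.IsTriangular (T * S) (d + e) := by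
  intro p
  rcases eq_or_ne p 0 with rfl | hp
  · simp
  · rw [Module.End.mul_apply, add_assoc, ← hS.degree_apply hp, ← hS.leadingCoeff_apply hp]
    exact hT (S p)

theorem IsTriangular.list_prod {ι : Type*} {T : ι → Module.End R (MvPolynomial σ R)}
    {d : ι → σ →₀ ℕ} (hT : ∀ i, m.IsTriangular (T i) (d i)) (L : List ι) :
    m.IsTriangular (L.map T).prod (L.map d).sum := by
  induction L with
  | nil => exact isTriangular_one
  | cons i L ih => simpa using (hT i).mul ih

theorem IsTriangular.add_of_lt (hT : m.IsTriangular T d)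
    (hS : ∀ p, m.degree (S p) ≼[m] e + m.degree p) (hed : e ≺[m] d) :
    m.IsTriangular (T + S) d := by
  intro p
  have hlt : m.degree (S p) ≺[m] d + m.degree p := by
    refine (hS p).trans_lt ?_
    rw [map_add, map_add]
    exact add_lt_add_left hed _
  refine ⟨m.degree_add_le.trans (max_le (hT p).1 hlt.le), ?_⟩
  rw [LinearMap.add_apply, coeff_add, (hT p).2, m.coeff_eq_zero_of_lt hlt, add_zero]

theorem isTriangular_mulLeft_X [Nontrivial R] (s : σ) :
    m.IsTriangular (LinearMap.mulLeft R (X s : MvPolynomial σ R)) (Finsupp.single s 1) := by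
  intro p
  rcases eq_or_ne p 0 with rfl | hp
  · simp
  · rw [LinearMap.mulLeft_apply, coeff_X_mul,
      m.degree_mul_of_isRegular_left (by rw [m.leadingCoeff_X]; exact isRegular_one) hp, m.degree_X]
    exact ⟨le_rfl, rfl⟩

/-- Only the term of largest shift contributes to the coefficient at `d i₀ + deg p`. -/
theorem IsTriangular.sum_smul_apply_ne_zero [NoZeroDivisors R] {ι : Type*}
    {T : ι → Module.End R (MvPolynomial σ R)} {d : ι → σ →₀ ℕ}
    (hT : ∀ i, m.IsTriangular (T i) (d i)) (hd : Function.Injective d) {f : ι →₀ R} (hf : f ≠ 0)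
    {p : MvPolynomial σ R} (hp : p ≠ 0) : (f.sum fun i c => c • T i) p ≠ 0 := by
  classical
  obtain ⟨i₀, hi₀, hmax⟩ :=
    f.support.exists_max_image (fun i => m.toSyn (d i)) (Finsupp.support_nonempty_iff.mpr hf)
  have hlower : ∀ i ∈ f.support, i ≠ i₀ → (T i p).coeff (d i₀ + m.degree p) = 0 := by
    intro i hi hne
    refine m.coeff_eq_zero_of_lt ((hT i p).1.trans_lt ?_)
    rw [map_add, map_add]
    exact add_lt_add_left ((hmax i hi).lt_of_ne fun h => hne (hd (m.toSyn.injective h))) _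
  intro h0
  have := congrArg (coeff (d i₀ + m.degree p)) h0
  rw [Finsupp.sum, LinearMap.sum_apply, coeff_sum, Finset.sum_eq_single i₀
      (fun i hi hne => by rw [LinearMap.smul_apply, coeff_smul, hlower i hi hne, smul_zero])
      (fun h => absurd hi₀ h), LinearMap.smul_apply, coeff_smul, (hT i₀ p).2, coeff_zero] at this
  exact mul_ne_zero (Finsupp.mem_support_iff.mp hi₀) (m.leadingCoeff_ne_zero_iff.mpr hp) this

end MonomialOrder

namespace MvPolynomial

variable {σ R : Type*} [CommRing R] [Fintype σ]

noncomputable def weightedEulerOp (w : σ → R) : Module.End R (MvPolynomial σ R) :=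
  ∑ i, w i • LinearMap.mulLeft R (X i) ∘ₗ (pderiv i).toLinearMap

theorem weightedEulerOp_apply (w : σ → R) (p : MvPolynomial σ R) :
    weightedEulerOp w p = ∑ i, w i • (X i * pderiv i p) := by
  simp [weightedEulerOp]

theorem weightedEulerOp_monomial (w : σ → R) (μ : σ →₀ ℕ) (c : R) :
    weightedEulerOp w (monomial μ c) = (∑ i, μ i • w i) • monomial μ c := by
  simp_rw [weightedEulerOp_apply, X_mul_pderiv_monomial, Finset.sum_smul, smul_assoc]
  exact Finset.sum_congr rfl fun i _ => smul_comm _ _ _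

theorem coeff_weightedEulerOp (w : σ → R) (μ : σ →₀ ℕ) (p : MvPolynomial σ R) :
    (weightedEulerOp w p).coeff μ = (∑ i, μ i • w i) * p.coeff μ := by
  induction p using MvPolynomial.induction_on' with
  | monomial ν c =>
    classical
    rw [weightedEulerOp_monomial, coeff_smul, coeff_monomial]
    split_ifs with h <;> simp [h]
  | add p q hp hq => rw [map_add, coeff_add, coeff_add, hp, hq, mul_add]

theorem support_weightedEulerOp_subset (w : σ → R) (p : MvPolynomial σ R) :
    (weightedEulerOp w p).support ⊆ p.support := by
  intro μ
  simp only [mem_support_iff, coeff_weightedEulerOp]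
  exact right_ne_zero_of_mul

theorem weightedEulerOp_X_mul (w : σ → R) (s : σ) (p : MvPolynomial σ R) :
    weightedEulerOp w (X s * p) = X s * weightedEulerOp w p + w s • (X s * p) := by
  classical
  simp_rw [weightedEulerOp_apply, Derivation.leibniz, pderiv_X, smul_eq_mul, mul_add, smul_add,
    Finset.sum_add_distrib, Finset.mul_sum, Pi.single_apply, mul_ite, mul_one, mul_zero, smul_ite,
    smul_zero, Finset.sum_ite_eq, Finset.mem_univ, if_true, mul_smul_comm, mul_left_comm (X s)]

end MvPolynomial

namespace HAlg

variable {h : ℂ} {n : ℕ}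

variable (h) in
noncomputable def gen (g : HGen n) : HAlg h n :=
  RingQuot.mkAlgHom ℂ (HRel h n) (FreeAlgebra.ι ℂ g)

variable (h) in
noncomputable abbrev y (i : Fin (n + 1)) : HAlg h n := gen h (i, true)

variable (h) in
noncomputable abbrev x (i : Fin (n + 1)) : HAlg h n := gen h (i, false)

theorem mkAlgHom_ι (g : HGen n) : RingQuot.mkAlgHom ℂ (HRel h n) (FreeAlgebra.ι ℂ g) = gen h g :=
  rfl

theorem adjoin_range_gen : Algebra.adjoin ℂ (Set.range (gen h : HGen n → HAlg h n)) = ⊤ := by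
  rw [show Set.range (gen h) = RingQuot.mkAlgHom ℂ (HRel h n) '' Set.range (FreeAlgebra.ι ℂ) from
      Set.range_comp _ _, Algebra.adjoin_image, FreeAlgebra.adjoin_range_ι,
    Algebra.map_top, AlgHom.range_eq_top]
  exact RingQuot.mkAlgHom_surjective ℂ _

theorem y_mul_y_of_lt {i j : Fin (n + 1)} (hij : i < j) : y h j * y h i = y h i * y h j := by
  simpa only [map_mul, mkAlgHom_ι] using RingQuot.mkAlgHom_rel ℂ (HRel.yy (h := h) hij)

theorem commute_y (i j : Fin (n + 1)) : Commute (y h i) (y h j) := by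
  rcases lt_trichotomy i j with hij | rfl | hij
  · exact (y_mul_y_of_lt hij).symm
  · exact Commute.refl _
  · exact y_mul_y_of_lt hij

theorem x_mul_y (i j : Fin (n + 1)) :
    x h j * y h i = y h i * x h j + h • (y h i * y h j) := by
  rcases lt_trichotomy i j with hij | rfl | hij
  · simpa only [map_mul, map_add, map_smul, mkAlgHom_ι, (commute_y i j).eq]
      using RingQuot.mkAlgHom_rel ℂ (HRel.xy (h := h) hij)
  · simpa only [map_mul, map_add, map_smul, mkAlgHom_ι]
      using RingQuot.mkAlgHom_rel ℂ (HRel.diag (h := h) i)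
  · have := RingQuot.mkAlgHom_rel ℂ (HRel.yx (h := h) hij)
    simp only [map_mul, map_sub, map_smul, mkAlgHom_ι] at this
    rw [this, (commute_y j i).eq, sub_add_cancel]

theorem x_mul_x_of_lt {i j : Fin (n + 1)} (hij : i < j) :
    x h j * x h i = x h i * x h j - h • (x h i * y h j) + h • (y h i * x h j)
      + (h * h) • (y h i * y h j) := by
  simpa only [map_mul, map_add, map_sub, map_smul, mkAlgHom_ι]
    using RingQuot.mkAlgHom_rel ℂ (HRel.xx (h := h) hij)

variable (h) in
noncomputable def yMon (s : Multiset (Fin (n + 1))) : HAlg h n := (s.sort.map (y h)).prod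

variable (h) in
noncomputable def xMon (t : Multiset (Fin (n + 1))) : HAlg h n := (t.sort.map (x h)).prod

variable (h) in
noncomputable def mon (s t : Multiset (Fin (n + 1))) : HAlg h n := yMon h s * xMon h t

theorem y_mul_yMon (i : Fin (n + 1)) (s : Multiset (Fin (n + 1))) :
    y h i * yMon h s = yMon h (i ::ₘ s) := by
  have hperm : (i :: s.sort).Perm (i ::ₘ s).sort := by
    rw [← Multiset.coe_eq_coe, ← Multiset.cons_coe, Multiset.sort_eq, Multiset.sort_eq]
  rw [yMon, yMon, ← List.prod_cons, ← List.map_cons]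
  exact (hperm.map _).prod_eq' (List.pairwise_map.mpr (List.pairwise_of_forall commute_y))

theorem x_mul_xMon {i : Fin (n + 1)} {t : Multiset (Fin (n + 1))} (hi : ∀ j ∈ t, i ≤ j) :
    x h i * xMon h t = xMon h (i ::ₘ t) := by
  rw [xMon, xMon, Multiset.sort_cons _ _ _ hi, List.map_cons, List.prod_cons]

theorem xMon_coe {L : List (Fin (n + 1))} (hL : L.Pairwise (· ≤ ·)) :
    xMon h (L : Multiset (Fin (n + 1))) = (L.map (x h)).prod := by
  rw [xMon, Multiset.coe_sort, List.mergeSort_eq_self _ hL]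

theorem x_mul_yMon (i : Fin (n + 1)) (s : Multiset (Fin (n + 1))) :
    x h i * yMon h s = yMon h s * x h i + ((Multiset.card s : ℂ) * h) • (y h i * yMon h s) := by
  induction s using Multiset.induction_on with
  | empty => simp [yMon]
  | cons a s ih =>
    rw [← y_mul_yMon, ← mul_assoc, x_mul_y, add_mul, mul_assoc, ih, mul_add, ← mul_assoc,
      mul_smul_comm, smul_mul_assoc, ← mul_assoc (y h a) (y h i), (commute_y a i).eq]
    simp only [Multiset.card_cons, Nat.cast_succ, add_mul, one_mul, add_smul, mul_assoc]
    abel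

theorem x_mul_mon (i : Fin (n + 1)) (s t : Multiset (Fin (n + 1))) :
    x h i * mon h s t
      = yMon h s * (x h i * xMon h t) + ((Multiset.card s : ℂ) * h) • mon h (i ::ₘ s) t := by
  rw [mon, mon, ← mul_assoc, x_mul_yMon, add_mul, mul_assoc, smul_mul_assoc, y_mul_yMon]

variable (h) in
noncomputable def monSpan (ℓ : Fin (n + 1)) : Submodule ℂ (HAlg h n) :=
  Submodule.span ℂ {z | ∃ s t, (∀ j ∈ t, ℓ ≤ j) ∧ mon h s t = z}

theorem mon_mem_monSpan {ℓ : Fin (n + 1)} (s : Multiset (Fin (n + 1)))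
    {t : Multiset (Fin (n + 1))} (ht : ∀ j ∈ t, ℓ ≤ j) : mon h s t ∈ monSpan h ℓ :=
  Submodule.subset_span ⟨s, t, ht, rfl⟩

theorem monSpan_mono {ℓ ℓ' : Fin (n + 1)} (hℓ : ℓ ≤ ℓ') : monSpan h ℓ' ≤ monSpan h ℓ :=
  Submodule.span_mono fun _ ⟨s, t, ht, hz⟩ => ⟨s, t, fun j hj => hℓ.trans (ht j hj), hz⟩

theorem mul_mem_monSpan {u : HAlg h n} {ℓ ℓ' : Fin (n + 1)}
    (hu : ∀ s t, (∀ j ∈ t, ℓ ≤ j) → u * mon h s t ∈ monSpan h ℓ') {z : HAlg h n}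
    (hz : z ∈ monSpan h ℓ) : u * z ∈ monSpan h ℓ' := by
  suffices monSpan h ℓ ≤ (monSpan h ℓ').comap (LinearMap.mulLeft ℂ u) from this hz
  exact Submodule.span_le.mpr fun _ ⟨s, t, ht, hz⟩ => hz ▸ hu s t ht

theorem y_mul_mem_monSpan (i : Fin (n + 1)) {ℓ : Fin (n + 1)} {z : HAlg h n}
    (hz : z ∈ monSpan h ℓ) : y h i * z ∈ monSpan h ℓ :=
  mul_mem_monSpan
    (fun s _ ht => by rw [mon, ← mul_assoc, y_mul_yMon]; exact mon_mem_monSpan _ ht) hz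

theorem yMon_mul_mem_monSpan (s : Multiset (Fin (n + 1))) {ℓ : Fin (n + 1)} {z : HAlg h n}
    (hz : z ∈ monSpan h ℓ) : yMon h s * z ∈ monSpan h ℓ := by
  induction s using Multiset.induction_on with
  | empty => simpa [yMon] using hz
  | cons i s ih => rw [← y_mul_yMon, mul_assoc]; exact y_mul_mem_monSpan i ih

theorem x_mul_mem_monSpan_self (i : Fin (n + 1)) {z : HAlg h n} (hz : z ∈ monSpan h i) :
    x h i * z ∈ monSpan h i := by
  refine mul_mem_monSpan (fun s t ht => ?_) hz
  rw [x_mul_mon, x_mul_xMon ht, ← mon]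
  refine add_mem (mon_mem_monSpan s ?_) (Submodule.smul_mem _ _ (mon_mem_monSpan _ ht))
  exact Multiset.forall_mem_cons.mpr ⟨le_rfl, ht⟩

/-- If `i ≤ k` the word `x_i x_k ⋯` is already ordered; otherwise `x_i x_k` is rewritten by the
`xx` relation, all of whose terms keep the `x`-indices `≥ k`. -/
theorem x_mul_list_prod_mem_monSpan {ℓ i : Fin (n + 1)} (hi : ℓ ≤ i) {L : List (Fin (n + 1))}
    (hL : L.Pairwise (· ≤ ·)) (hℓ : ∀ j ∈ L, ℓ ≤ j) :
    x h i * (L.map (x h)).prod ∈ monSpan h ℓ := by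
  induction L generalizing ℓ with
  | nil => simpa [mon, yMon, xMon] using mon_mem_monSpan (h := h) 0 (t := {i}) (by simpa using hi)
  | cons k L ih =>
    obtain ⟨hkL, hL⟩ := List.pairwise_cons.mp hL
    have hP : (L.map (x h)).prod ∈ monSpan h k := by
      simpa [mon, yMon, xMon_coe hL] using
        mon_mem_monSpan (h := h) 0 (t := (L : Multiset _))
          fun j hj => hkL j (Multiset.mem_coe.mp hj)
    by_cases hik : i ≤ k
    · have hiL : (i :: k :: L).Pairwise (· ≤ ·) :=
        List.pairwise_cons.mpr ⟨List.forall_mem_cons.mpr ⟨hik, fun j hj => hik.trans (hkL j hj)⟩,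
          List.pairwise_cons.mpr ⟨hkL, hL⟩⟩
      have := mon_mem_monSpan (h := h) 0 (t := ((i :: k :: L : List _) : Multiset _))
        fun j hj => (List.forall_mem_cons.mpr ⟨hi, hℓ⟩) j (Multiset.mem_coe.mp hj)
      simpa [mon, yMon, xMon_coe hiL] using this
    · have hki : k < i := not_le.mp hik
      have hxP : x h i * (L.map (x h)).prod ∈ monSpan h k := ih hki.le hL hkL
      have hyP := y_mul_mem_monSpan i hP
      rw [List.map_cons, List.prod_cons, ← mul_assoc, x_mul_x_of_lt hki]
      simp only [add_mul, sub_mul, smul_mul_assoc, mul_assoc]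
      refine monSpan_mono (hℓ k List.mem_cons_self) ?_
      exact add_mem (add_mem (sub_mem (x_mul_mem_monSpan_self k hxP)
        (Submodule.smul_mem _ _ (x_mul_mem_monSpan_self k hyP)))
        (Submodule.smul_mem _ _ (y_mul_mem_monSpan k hxP)))
        (Submodule.smul_mem _ _ (y_mul_mem_monSpan k hyP))

theorem x_mul_mem_monSpan {ℓ i : Fin (n + 1)} (hi : ℓ ≤ i) {z : HAlg h n}
    (hz : z ∈ monSpan h ℓ) : x h i * z ∈ monSpan h ℓ := by
  refine mul_mem_monSpan (fun s t ht => ?_) hz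
  rw [x_mul_mon]
  refine add_mem (yMon_mul_mem_monSpan s ?_) (Submodule.smul_mem _ _ (mon_mem_monSpan _ ht))
  exact x_mul_list_prod_mem_monSpan hi (Multiset.pairwise_sort _ _)
    fun j hj => ht j (Multiset.mem_sort _ |>.mp hj)

theorem monSpan_zero_eq_top : monSpan h (0 : Fin (n + 1)) = ⊤ := by
  refine Submodule.eq_top_of_one_mem_of_mul_mem adjoin_range_gen ?_ ?_
  · simpa [mon, yMon, xMon] using mon_mem_monSpan (h := h) (ℓ := 0) 0 (t := 0) (by simp)
  · rintro _ ⟨⟨i, _ | _⟩, rfl⟩ z hz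
    · exact x_mul_mem_monSpan (Fin.zero_le i) hz
    · exact y_mul_mem_monSpan i hz

theorem exists_sum_mon (a : HAlg h n) :
    ∃ f : Multiset (Fin (n + 1)) × Multiset (Fin (n + 1)) →₀ ℂ,
      (f.sum fun st c => c • mon h st.1 st.2) = a := by
  have ha : a ∈ monSpan h 0 := monSpan_zero_eq_top ▸ Submodule.mem_top
  refine Finsupp.mem_span_range_iff_exists_finsupp.mp (Submodule.span_mono ?_ ha)
  rintro _ ⟨s, t, -, rfl⟩
  exact ⟨(s, t), rfl⟩

/-- `(i, true)` is the variable `y_i` and `(i, false)` is `w_i`; the lexicographic product order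
is there for `MonomialOrder.lex`. -/
abbrev Var (n : ℕ) := Fin (n + 1) ×ₗ Bool

abbrev yVar (i : Fin (n + 1)) : Var n := toLex (i, true)

abbrev wVar (i : Fin (n + 1)) : Var n := toLex (i, false)

theorem yVar_injective : Function.Injective (yVar : Fin (n + 1) → Var n) :=
  fun _ _ hij => by simpa using hij

theorem wVar_injective : Function.Injective (wVar : Fin (n + 1) → Var n) :=
  fun _ _ hij => by simpa using hij

noncomputable abbrev lexOrder (n : ℕ) : MonomialOrder (Var n) := MonomialOrder.lex

/-- With `[Θ, y_j] = y_j` and `[Θ, w_j] = c w_j`, the `xx` relation for `x_i = y_i (w_i + h Θ)`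
holds exactly when `c = -2`. -/
def weight (v : Var n) : ℂ := if (ofLex v).2 then 1 else -2

noncomputable abbrev euler (n : ℕ) : Module.End ℂ (MvPolynomial (Var n) ℂ) :=
  weightedEulerOp weight

theorem euler_yVar_mul (i : Fin (n + 1)) (p : MvPolynomial (Var n) ℂ) :
    euler n (X (yVar i) * p) = X (yVar i) * euler n p + X (yVar i) * p := by
  simp [weightedEulerOp_X_mul, weight]

theorem euler_wVar_mul (i : Fin (n + 1)) (p : MvPolynomial (Var n) ℂ) :
    euler n (X (wVar i) * p) = X (wVar i) * euler n p - (2 : ℂ) • (X (wVar i) * p) := by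
  simp [weightedEulerOp_X_mul, weight, sub_eq_add_neg, neg_smul]

variable (n) in
noncomputable def yOp (i : Fin (n + 1)) : Module.End ℂ (MvPolynomial (Var n) ℂ) :=
  LinearMap.mulLeft ℂ (X (yVar i))

variable (h) in
noncomputable def xOp (i : Fin (n + 1)) : Module.End ℂ (MvPolynomial (Var n) ℂ) :=
  yOp n i * (LinearMap.mulLeft ℂ (X (wVar i)) + h • euler n)

theorem xOp_apply (i : Fin (n + 1)) (p : MvPolynomial (Var n) ℂ) :
    xOp h i p = X (yVar i) * (X (wVar i) * p + h • euler n p) := rfl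

theorem yOp_mul_yOp (i j : Fin (n + 1)) : yOp n j * yOp n i = yOp n i * yOp n j := by
  refine LinearMap.ext fun p => ?_
  simp only [yOp, Module.End.mul_apply, LinearMap.mulLeft_apply]
  ring

theorem xOp_mul_yOp (i j : Fin (n + 1)) :
    xOp h j * yOp n i = yOp n i * xOp h j + h • (yOp n i * yOp n j) := by
  refine LinearMap.ext fun p => ?_
  simp only [yOp, Module.End.mul_apply, LinearMap.add_apply, LinearMap.smul_apply,
    LinearMap.mulLeft_apply, xOp_apply, euler_yVar_mul, smul_eq_C_mul]
  ring

theorem yOp_mul_xOp (i j : Fin (n + 1)) :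
    yOp n j * xOp h i = xOp h i * yOp n j - h • (yOp n i * yOp n j) := by
  rw [xOp_mul_yOp, yOp_mul_yOp i j, add_sub_cancel_right]

theorem xOp_mul_xOp (i j : Fin (n + 1)) :
    xOp h j * xOp h i = xOp h i * xOp h j - h • (xOp h i * yOp n j)
      + h • (yOp n i * xOp h j) + (h * h) • (yOp n i * yOp n j) := by
  refine LinearMap.ext fun p => ?_
  simp only [yOp, Module.End.mul_apply, LinearMap.add_apply, LinearMap.sub_apply,
    LinearMap.smul_apply, LinearMap.mulLeft_apply, xOp_apply, map_add, euler_yVar_mul,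
    euler_wVar_mul, smul_eq_C_mul]
  simp only [map_mul, map_ofNat]
  ring

variable (h n) in
noncomputable def genOp (g : HGen n) : Module.End ℂ (MvPolynomial (Var n) ℂ) :=
  if g.2 then yOp n g.1 else xOp h g.1

theorem genOp_respects_rel ⦃a b : FreeAlgebra ℂ (HGen n)⦄ (r : HRel h n a b) :
    FreeAlgebra.lift ℂ (genOp h n) a = FreeAlgebra.lift ℂ (genOp h n) b := by
  induction r with
  | diag i => simpa [genOp] using xOp_mul_yOp i i
  | xy _ => simpa [genOp] using xOp_mul_yOp _ _
  | yx _ => simpa [genOp] using yOp_mul_xOp _ _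
  | yy _ => simpa [genOp] using yOp_mul_yOp _ _
  | xx _ => simpa [genOp] using xOp_mul_xOp _ _

variable (h n) in
noncomputable def rep : HAlg h n →ₐ[ℂ] Module.End ℂ (MvPolynomial (Var n) ℂ) :=
  RingQuot.liftAlgHom ℂ ⟨FreeAlgebra.lift ℂ (genOp h n), genOp_respects_rel⟩

theorem rep_gen (g : HGen n) : rep h n (gen h g) = genOp h n g := by
  simp [rep, gen]

theorem isTriangular_yOp (i : Fin (n + 1)) :
    (lexOrder n).IsTriangular (yOp n i) (Finsupp.single (yVar i) 1) :=
  MonomialOrder.isTriangular_mulLeft_X _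

theorem isTriangular_xOp (i : Fin (n + 1)) :
    (lexOrder n).IsTriangular (xOp h i)
      (Finsupp.single (yVar i) 1 + Finsupp.single (wVar i) 1) := by
  refine (isTriangular_yOp i).mul
    ((MonomialOrder.isTriangular_mulLeft_X _).add_of_lt (e := 0) ?_ ?_)
  · intro p
    rw [zero_add]
    exact (lexOrder n).degree_le_degree_of_support_subset
      (support_smul.trans (support_weightedEulerOp_subset _ _))
  · rw [map_zero, MonomialOrder.toSyn_lt_iff_ne_zero, ne_eq,
      map_eq_zero_iff _ (lexOrder n).toSyn.injective]
    exact Finsupp.single_ne_zero.mpr one_ne_zero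

variable (n) in
noncomputable def monShift (s t : Multiset (Fin (n + 1))) : Var n →₀ ℕ :=
  Multiset.toFinsupp ((s + t).map yVar + t.map wVar)

theorem monShift_injective :
    Function.Injective fun st : Multiset (Fin (n + 1)) × Multiset (Fin (n + 1)) =>
      monShift n st.1 st.2 := by
  rintro ⟨s, t⟩ ⟨s', t'⟩ hst
  have hcount (v : Var n) := DFunLike.congr_fun hst v
  simp only [monShift, Multiset.toFinsupp_apply, Multiset.count_add] at hcount
  have hy (u : Multiset (Fin (n + 1))) (i : Fin (n + 1)) : (u.map yVar).count (wVar i) = 0 :=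
    Multiset.count_eq_zero.mpr (by simp)
  have hw (u : Multiset (Fin (n + 1))) (i : Fin (n + 1)) : (u.map wVar).count (yVar i) = 0 :=
    Multiset.count_eq_zero.mpr (by simp)
  have ht : t = t' := Multiset.ext.mpr fun i => by
    simpa [hy, Multiset.count_map_eq_count' _ _ wVar_injective] using hcount (wVar i)
  subst ht
  have hst : s + t = s' + t := Multiset.ext.mpr fun i => by
    simpa [hw, Multiset.count_map_eq_count' _ _ yVar_injective] using hcount (yVar i)
  rw [add_left_injective t hst]

theorem isTriangular_rep_mon (s t : Multiset (Fin (n + 1))) :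
    (lexOrder n).IsTriangular (rep h n (mon h s t)) (monShift n s t) := by
  have hY : rep h n (yMon h s) = (s.sort.map (yOp n)).prod := by
    simp only [yMon, map_list_prod, List.map_map, Function.comp_def, rep_gen, genOp, if_true]
  have hX : rep h n (xMon h t) = (t.sort.map (xOp h)).prod := by
    simp only [xMon, map_list_prod, List.map_map, Function.comp_def, rep_gen, genOp,
      Bool.false_eq_true, if_false]
  have := (MonomialOrder.IsTriangular.list_prod isTriangular_yOp s.sort).mul
    (MonomialOrder.IsTriangular.list_prod (isTriangular_xOp (h := h)) t.sort)
  rw [mon, map_mul, hY, hX]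
  convert this using 1
  rw [← Multiset.sum_coe, ← Multiset.sum_coe, ← Multiset.map_coe, ← Multiset.map_coe,
    Multiset.sort_eq, Multiset.sort_eq, Multiset.sum_map_add, monShift, Multiset.map_add, map_add,
    map_add, Multiset.toFinsupp_map, Multiset.toFinsupp_map, Multiset.toFinsupp_map]
  abel

theorem rep_apply_ne_zero {a : HAlg h n} (ha : a ≠ 0) {p : MvPolynomial (Var n) ℂ} (hp : p ≠ 0) :
    rep h n a p ≠ 0 := by
  obtain ⟨f, rfl⟩ := exists_sum_mon a
  have hf : f ≠ 0 := by
    rintro rfl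
    exact ha (by simp)
  have hrep : rep h n (f.sum fun st c => c • mon h st.1 st.2)
      = f.sum fun st c => c • rep h n (mon h st.1 st.2) := by
    rw [map_finsuppSum]
    exact Finsupp.sum_congr fun st _ => map_smul _ _ _
  have htri : ∀ st : Multiset (Fin (n + 1)) × Multiset (Fin (n + 1)),
      (lexOrder n).IsTriangular (rep h n (mon h st.1 st.2)) (monShift n st.1 st.2) :=
    fun st => isTriangular_rep_mon st.1 st.2
  rw [hrep]
  exact MonomialOrder.IsTriangular.sum_smul_apply_ne_zero htri monShift_injective hf hp

instance : NoZeroDivisors (HAlg h n) where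
  eq_zero_or_eq_zero_of_mul_eq_zero {a b} hab := by
    by_contra! hne
    refine rep_apply_ne_zero hne.1 (rep_apply_ne_zero hne.2 one_ne_zero) ?_
    rw [← Module.End.mul_apply, ← map_mul, hab, map_zero, LinearMap.zero_apply]

end HAlg

/-- The `h`-deformed algebra `H_n` has no zero divisors: it is a domain. -/
theorem HAlg_noZeroDivisors (h : ℂ) (n : ℕ) :
    ∀ a b : HAlg h n, a * b = 0 → a = 0 ∨ b = 0 :=
  fun _ _ => mul_eq_zero.mp
end

section
/- In H_I, the element (x_i + x_j) and (y_i + y_j) satisfy the same relation as a single pair of generators: (x_i + x_j)(y_i + y_j) = (y_i + y_j)(x_i + x_j) + h (y_i + y_j)^2. -/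
/-- Braiding property of `H_I`: the sums `x i + x j` and `y i + y j` satisfy the
same relation as a single pair of generators. -/
theorem braided_sum {R : Type*} [Ring R] [Algebra ℂ R] {ι : Type*} [LinearOrder ι]
    (h : ℂ) (x y : ι → R)
    (rel_diag : ∀ i, x i * y i = y i * x i + h • (y i * y i))
    (rel_xy : ∀ i j, i < j → x j * y i = y i * x j + h • (y i * y j))
    (rel_yx : ∀ i j, i < j → y j * x i = x i * y j - h • (y i * y j))
    (rel_yy : ∀ i j, i < j → y j * y i = y i * y j)
    (rel_xx : ∀ i j, i < j →
      x j * x i = x i * x j - h • (x i * y j) + h • (y i * x j) + (h * h) • (y i * y j))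
    (i j : ι) (hij : i < j) :
    (x i + x j) * (y i + y j) =
      (y i + y j) * (x i + x j) + h • ((y i + y j) * (y i + y j)) := by
  simp only [add_mul, mul_add, rel_diag, rel_xy i j hij, rel_yx i j hij, rel_yy i j hij,
    smul_add]
  abel
end

section
/- For the quadratic form f = (01)(02) with coefficients A, B, C (so f = x^2 A + x y B + y^2 C), the h-deformed discriminant d_2 := 2AC - 2B^2 - 2h AB + (3h^2/2) A^2 equals -(1/2)(12)^2, where (12) = x_1 y_2 - y_1 x_2 - h y_1 y_2. -/
/-- The `h`-deformed discriminant `d₂ = 2AC - 2B² - 2h AB + (3h²/2) A²` of the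
quadratic form `(01)(02) = x² A + 2 x y B + y² C` equals `-(1/2) (12)²`. -/
theorem discriminant_eq_bracket_square {R : Type*} [Ring R] [Algebra ℂ R]
    (h : ℂ) (x y : Fin 3 → R)
    (rel_diag : ∀ i, x i * y i = y i * x i + h • (y i * y i))
    (rel_xy : ∀ i j, i < j → x j * y i = y i * x j + h • (y i * y j))
    (rel_yx : ∀ i j, i < j → y j * x i = x i * y j - h • (y i * y j))
    (rel_yy : ∀ i j, i < j → y j * y i = y i * y j)
    (rel_xx : ∀ i j, i < j →
      x j * x i = x i * x j - h • (x i * y j) + h • (y i * x j) + (h * h) • (y i * y j))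
    (A B C : R)
    (hA : A = y 1 * y 2)
    (hB : B = -((1 / 2 : ℂ) • (x 1 * y 2 + y 1 * x 2)) - h • (y 1 * y 2))
    (hC : C = x 1 * x 2 + h • (x 1 * y 2) + (2 * h) • (y 1 * x 2) + (2 * h ^ 2) • (y 1 * y 2)) :
    (2 : ℂ) • (A * C) - (2 : ℂ) • (B * B) - (2 * h) • (A * B) +
        ((3 / 2) * h ^ 2) • (A * A) =
      -((1 / 2 : ℂ) • ((x 1 * y 2 - y 1 * x 2 - h • (y 1 * y 2)) *
        (x 1 * y 2 - y 1 * x 2 - h • (y 1 * y 2)))) := by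
  have lt12 : (1 : Fin 3) < 2 := by decide
  have e1 := rel_diag 1
  have e2 := rel_diag 2
  have e3 := rel_xy 1 2 lt12
  have e4 := rel_yx 1 2 lt12
  have e5 := rel_yy 1 2 lt12
  have e6 := rel_xx 1 2 lt12
  have e1' : ∀ z, x 1 * (y 1 * z) = (y 1 * x 1 + h • (y 1 * y 1)) * z := fun z => by
    rw [← mul_assoc, e1]
  have e2' : ∀ z, x 2 * (y 2 * z) = (y 2 * x 2 + h • (y 2 * y 2)) * z := fun z => by
    rw [← mul_assoc, e2]
  have e3' : ∀ z, x 2 * (y 1 * z) = (y 1 * x 2 + h • (y 1 * y 2)) * z := fun z => by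
    rw [← mul_assoc, e3]
  have e4' : ∀ z, y 2 * (x 1 * z) = (x 1 * y 2 - h • (y 1 * y 2)) * z := fun z => by
    rw [← mul_assoc, e4]
  have e5' : ∀ z, y 2 * (y 1 * z) = (y 1 * y 2) * z := fun z => by
    rw [← mul_assoc, e5]
  have e6' : ∀ z, x 2 * (x 1 * z) =
      (x 1 * x 2 - h • (x 1 * y 2) + h • (y 1 * x 2) + (h * h) • (y 1 * y 2)) * z := fun z => by
    rw [← mul_assoc, e6]
  subst hA hB hC
  simp only [e1, e2, e3, e4, e5, e6, e1', e2', e3', e4', e5', e6',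
    mul_add, add_mul, mul_sub, sub_mul, smul_mul_assoc, mul_smul_comm,
    smul_add, smul_sub, smul_smul, mul_assoc, neg_mul, mul_neg, smul_neg, neg_smul,
    neg_add, neg_neg, neg_sub]
  module
end

section
/- For the quadratic form f = (01)^2, the h-deformed discriminant d_2 = 2AC - 2B^2 - 2hAB + (3h^2/2)A^2 vanishes, where A, B, C are the coefficients of f = x^2 A + 2xy B + y^2 C with A = y_1^2, B = -x_1 y_1 - (h/2) y_1^2, C = x_1^2 + 3h x_1 y_1. -/
/-- For the quadratic form `f = (01)² = x² A + 2xy B + y² C` with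
`A = y₁²`, `B = -x₁y₁ - (h/2) y₁²`, `C = x₁² + 3h x₁y₁`,
the `h`-deformed discriminant `d₂ = 2AC - 2B² - 2h AB + (3h²/2) A²` vanishes. -/
theorem discriminant_of_square_vanishes {R : Type*} [Ring R] [Algebra ℂ R]
    (h : ℂ) (x y : Fin 2 → R)
    (rel_diag : ∀ i, x i * y i = y i * x i + h • (y i * y i))
    (rel_xy : ∀ i j, i < j → x j * y i = y i * x j + h • (y i * y j))
    (rel_yx : ∀ i j, i < j → y j * x i = x i * y j - h • (y i * y j))
    (rel_yy : ∀ i j, i < j → y j * y i = y i * y j)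
    (rel_xx : ∀ i j, i < j →
      x j * x i = x i * x j - h • (x i * y j) + h • (y i * x j) + (h * h) • (y i * y j))
    (A B C : R)
    (hA : A = y 1 * y 1)
    (hB : B = -(x 1 * y 1) - (h / 2) • (y 1 * y 1))
    (hC : C = x 1 * x 1 + (3 * h) • (x 1 * y 1)) :
    (x 0 * y 1 - y 0 * x 1 - h • (y 0 * y 1)) *
        (x 0 * y 1 - y 0 * x 1 - h • (y 0 * y 1)) =
      x 0 * x 0 * A + (2 : ℂ) • (x 0 * y 0 * B) + y 0 * y 0 * C ∧
    (2 : ℂ) • (A * C) - (2 : ℂ) • (B * B) - (2 * h) • (A * B) +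
        ((3 / 2) * h ^ 2) • (A * A) = 0 := by
  have h01 : (0 : Fin 2) < 1 := by decide
  -- abbreviations: a = x 0, b = y 0, u = x 1, v = y 1
  have r1 : x 0 * y 0 = y 0 * x 0 + h • (y 0 * y 0) := rel_diag 0
  have r2 : x 1 * y 1 = y 1 * x 1 + h • (y 1 * y 1) := rel_diag 1
  have r3 : x 1 * y 0 = y 0 * x 1 + h • (y 0 * y 1) := rel_xy 0 1 h01
  have r4 : y 1 * x 0 = x 0 * y 1 - h • (y 0 * y 1) := rel_yx 0 1 h01
  have r5 : y 1 * y 0 = y 0 * y 1 := rel_yy 0 1 h01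
  have r6 : x 1 * x 0 = x 0 * x 1 - h • (x 0 * y 1) + h • (y 0 * x 1)
      + (h * h) • (y 0 * y 1) := rel_xx 0 1 h01
  -- lifted (right-associated) versions
  have r1' : ∀ t : R, x 0 * (y 0 * t) = y 0 * (x 0 * t) + h • (y 0 * (y 0 * t)) := by
    intro t
    rw [← mul_assoc, r1, add_mul, smul_mul_assoc, mul_assoc, mul_assoc]
  have r2' : ∀ t : R, x 1 * (y 1 * t) = y 1 * (x 1 * t) + h • (y 1 * (y 1 * t)) := by
    intro t
    rw [← mul_assoc, r2, add_mul, smul_mul_assoc, mul_assoc, mul_assoc]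
  have r3' : ∀ t : R, x 1 * (y 0 * t) = y 0 * (x 1 * t) + h • (y 0 * (y 1 * t)) := by
    intro t
    rw [← mul_assoc, r3, add_mul, smul_mul_assoc, mul_assoc, mul_assoc]
  have r4' : ∀ t : R, y 1 * (x 0 * t) = x 0 * (y 1 * t) - h • (y 0 * (y 1 * t)) := by
    intro t
    rw [← mul_assoc, r4, sub_mul, smul_mul_assoc, mul_assoc, mul_assoc]
  have r5' : ∀ t : R, y 1 * (y 0 * t) = y 0 * (y 1 * t) := by
    intro t
    rw [← mul_assoc, r5, mul_assoc]
  have r6' : ∀ t : R, x 1 * (x 0 * t) = x 0 * (x 1 * t) - h • (x 0 * (y 1 * t))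
      + h • (y 0 * (x 1 * t)) + (h * h) • (y 0 * (y 1 * t)) := by
    intro t
    rw [← mul_assoc, r6, add_mul, add_mul, sub_mul, smul_mul_assoc, smul_mul_assoc,
      smul_mul_assoc, mul_assoc, mul_assoc, mul_assoc, mul_assoc]
  subst hA hB hC
  constructor
  · simp only [mul_add, add_mul, mul_sub, sub_mul, neg_mul, mul_neg, neg_neg,
      smul_mul_assoc, mul_smul_comm, smul_smul, smul_add, smul_sub, smul_neg,
      mul_assoc, r1, r1', r2, r2', r3, r3', r4, r4', r5, r5', r6, r6']
    module
  · simp only [mul_add, add_mul, mul_sub, sub_mul, neg_mul, mul_neg, neg_neg,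
      smul_mul_assoc, mul_smul_comm, smul_smul, smul_add, smul_sub, smul_neg,
      mul_assoc, r2, r2']
    module
end

section
/- In H_I with h possibly nonzero, the coefficients A = y_1^2, B = -x_1 y_1 + (3h/2) y_1^2, C = x_1^2 - h x_1 y_1 give the left-coefficient expansion (01)^2 = A x_0^2 + 2 B x_0 y_0 + C y_0^2, while A' = y_1^2, B' = -x_1 y_1 - (h/2) y_1^2, C' = x_1^2 + 3h x_1 y_1 give the right-coefficient expansion (01)^2 = x_0^2 A' + 2 x_0 y_0 B' + y_0^2 C'. -/
/-- Left- and right-coefficient expansions of the quadratic form `(01)²`: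
`(01)² = A x² + 2 B x y + C y²` with `A = y₁²`, `B = -x₁y₁ + (3h/2) y₁²`,
`C = x₁² - h x₁y₁`, and `(01)² = x² A' + 2 x y B' + y² C'` with `A' = y₁²`,
`B' = -x₁y₁ - (h/2) y₁²`, `C' = x₁² + 3h x₁y₁`. -/
theorem square_left_right_coefficients {R : Type*} [Ring R] [Algebra ℂ R]
    (h : ℂ) (x y : Fin 2 → R)
    (rel_diag : ∀ i, x i * y i = y i * x i + h • (y i * y i))
    (rel_xy : ∀ i j, i < j → x j * y i = y i * x j + h • (y i * y j))
    (rel_yx : ∀ i j, i < j → y j * x i = x i * y j - h • (y i * y j))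
    (rel_yy : ∀ i j, i < j → y j * y i = y i * y j)
    (rel_xx : ∀ i j, i < j →
      x j * x i = x i * x j - h • (x i * y j) + h • (y i * x j) + (h * h) • (y i * y j)) :
    (x 0 * y 1 - y 0 * x 1 - h • (y 0 * y 1)) *
        (x 0 * y 1 - y 0 * x 1 - h • (y 0 * y 1)) =
      (y 1 * y 1) * (x 0 * x 0) +
        (2 : ℂ) • ((-(x 1 * y 1) + ((3 / 2) * h) • (y 1 * y 1)) * (x 0 * y 0)) +
        (x 1 * x 1 - h • (x 1 * y 1)) * (y 0 * y 0) ∧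
    (x 0 * y 1 - y 0 * x 1 - h • (y 0 * y 1)) *
        (x 0 * y 1 - y 0 * x 1 - h • (y 0 * y 1)) =
      (x 0 * x 0) * (y 1 * y 1) +
        (2 : ℂ) • ((x 0 * y 0) * (-(x 1 * y 1) - (h / 2) • (y 1 * y 1))) +
        (y 0 * y 0) * (x 1 * x 1 + (3 * h) • (x 1 * y 1)) := by
  have e1 : x 0 * y 0 = y 0 * x 0 + h • (y 0 * y 0) := rel_diag 0
  have e2 : x 1 * y 1 = y 1 * x 1 + h • (y 1 * y 1) := rel_diag 1
  have e3 : x 1 * y 0 = y 0 * x 1 + h • (y 0 * y 1) := rel_xy 0 1 (by decide)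
  have e4 : y 1 * x 0 = x 0 * y 1 - h • (y 0 * y 1) := rel_yx 0 1 (by decide)
  have e5 : y 1 * y 0 = y 0 * y 1 := rel_yy 0 1 (by decide)
  have e6 : x 1 * x 0 = x 0 * x 1 - h • (x 0 * y 1) + h • (y 0 * x 1) + (h * h) • (y 0 * y 1) :=
    rel_xx 0 1 (by decide)
  have e1' : ∀ c : R, x 0 * (y 0 * c) = (y 0 * x 0 + h • (y 0 * y 0)) * c := fun c => by
    rw [← mul_assoc, e1]
  have e2' : ∀ c : R, x 1 * (y 1 * c) = (y 1 * x 1 + h • (y 1 * y 1)) * c := fun c => by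
    rw [← mul_assoc, e2]
  have e3' : ∀ c : R, x 1 * (y 0 * c) = (y 0 * x 1 + h • (y 0 * y 1)) * c := fun c => by
    rw [← mul_assoc, e3]
  have e4' : ∀ c : R, y 1 * (x 0 * c) = (x 0 * y 1 - h • (y 0 * y 1)) * c := fun c => by
    rw [← mul_assoc, e4]
  have e5' : ∀ c : R, y 1 * (y 0 * c) = y 0 * (y 1 * c) := fun c => by
    rw [← mul_assoc, e5, mul_assoc]
  have e6' : ∀ c : R, x 1 * (x 0 * c) =
      (x 0 * x 1 - h • (x 0 * y 1) + h • (y 0 * x 1) + (h * h) • (y 0 * y 1)) * c := fun c => by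
    rw [← mul_assoc, e6]
  constructor <;>
  · simp only [mul_add, add_mul, mul_sub, sub_mul, smul_mul_assoc, mul_smul_comm,
      smul_add, smul_sub, smul_smul, neg_mul, mul_neg, neg_add, neg_sub, neg_neg, smul_neg, mul_assoc, e1, e2, e3, e4, e5, e6,
      e1', e2', e3', e4', e5', e6']
    module
end
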